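/- arXiv:2309.03117 — 7 statements merged into one kernel-verified Lean document; each statement's English description precedes it below -/
import Mathlib

section
/- Let n ≥ 2 and let w ∈ S_n ⊆ Ŝ_n (so w is a bijection of ℤ with w(k+n) = w(k)+n mapping {1,…,n} to itself). Then the map (i,j) ↦ (i, j + (j−i)·n) is a bijection from the inversion set Inv(w) onto the set Inv₀(γ⁻¹wγ) of vanishing inversions of γ⁻¹wγ. -/
/-!
Since `w` fixes every block `{qn+1, …, qn+n}` setwise, conjugating by `γ` is explicit:
`γ⁻¹wγ(k) = (n+1)·w(k) − n·k` for every `k`. Combined with `w(j + (j−i)n) = w(j) + (j−i)n`,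
this gives `γ⁻¹wγ(i) − γ⁻¹wγ(j + (j−i)n) = (n+1)(w(i) − w(j))`, so `(i, j)` is an inversion of `w`
exactly when its image `(i, i + (n+1)(j−i))` is an inversion of `γ⁻¹wγ`; and the pairs
`(i, i + (n+1)d)` are precisely those with `j − i ≡ 0 mod (n+1)`.
-/

/-- The element γ of the extended affine symmetric group: `γ(k) = k − n·((k−1) mod n)`. -/
def gam (n : ℕ) (k : ℤ) : ℤ := k - n * ((k - 1) % (n : ℤ))

/-- The inverse of γ: `γ⁻¹(m) = m + n·((m−1) mod n)`. -/
def gamInv (n : ℕ) (m : ℤ) : ℤ := m + n * ((m - 1) % (n : ℤ))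

/-- The inversion set of a function `u : ℤ → ℤ`:
pairs `(i,j)` with `1 ≤ i ≤ n`, `i < j` and `u(i) > u(j)`. -/
def InvSet (n : ℕ) (u : ℤ → ℤ) : Set (ℤ × ℤ) :=
  {p | 1 ≤ p.1 ∧ p.1 ≤ (n : ℤ) ∧ p.1 < p.2 ∧ u p.2 < u p.1}

/-- The vanishing inversions: inversions `(i,j)` with `j − i ≡ 0 mod (n+1)`. -/
def InvSet0 (n : ℕ) (u : ℤ → ℤ) : Set (ℤ × ℤ) :=
  {p ∈ InvSet n u | ((n : ℤ) + 1) ∣ (p.2 - p.1)}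

lemma map_add_mul_of_map_add {f : ℤ → ℤ} {n : ℤ} (hper : ∀ k, f (k + n) = f k + n) (k t : ℤ) :
    f (k + t * n) = f k + t * n := by
  have hperiodic : Function.Periodic (fun k => f k - k) n := fun k => by
    simp only [hper]; ring
  have : f (k + t * n) - (k + t * n) = f k - k := hperiodic.int_mul t k
  linarith

section Conjugation

variable {n : ℕ} {f : ℤ → ℤ}

lemma map_sub_one_ediv_eq (hper : ∀ k : ℤ, f (k + n) = f k + n)
    (hwindow : ∀ k : ℤ, 1 ≤ k → k ≤ n → 1 ≤ f k ∧ f k ≤ n) (k : ℤ) :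
    (f k - 1) / n = (k - 1) / n := by
  rcases n.eq_zero_or_pos with rfl | hn
  · simp
  have hn' : (0 : ℤ) < n := by exact_mod_cast hn
  set r := (k - 1) % (n : ℤ)
  set q := (k - 1) / (n : ℤ)
  have hk : k = (r + 1) + q * n := by
    have := Int.emod_add_mul_ediv (k - 1) n
    linear_combination -this
  have hr : 0 ≤ r ∧ r < n := ⟨Int.emod_nonneg _ hn'.ne', Int.emod_lt_of_pos _ hn'⟩
  obtain ⟨hlo, hhi⟩ := hwindow (r + 1) (by omega) (by omega)
  have hfk : f k - 1 = (f (r + 1) - 1) + q * n := by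
    rw [hk, map_add_mul_of_map_add hper]; ring
  rw [hfk, Int.add_mul_ediv_right _ _ hn'.ne', Int.ediv_eq_zero_of_lt (by omega) (by omega),
    zero_add]

lemma gamInv_comp_comp_gam_apply (hper : ∀ k : ℤ, f (k + n) = f k + n)
    (hwindow : ∀ k : ℤ, 1 ≤ k → k ≤ n → 1 ≤ f k ∧ f k ≤ n) (k : ℤ) :
    (gamInv n ∘ f ∘ gam n) k = (n + 1) * f k - n * k := by
  have hfgam : f (gam n k) = f k - n * ((k - 1) % n) := by
    rw [gam, show k - n * ((k - 1) % n) = k + -((k - 1) % n) * n by ring,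
      map_add_mul_of_map_add hper]
    ring
  have hmod : (f k - n * ((k - 1) % n) - 1) % n = (f k - 1) % n := by
    rw [sub_right_comm, sub_eq_add_neg, ← mul_neg, Int.add_mul_emod_self_left]
  rw [Function.comp_apply, Function.comp_apply, gamInv, hfgam, hmod, Int.emod_def (f k - 1),
    map_sub_one_ediv_eq hper hwindow k, Int.emod_def (k - 1)]
  ring

lemma mem_invSet_gamInv_comp_comp_gam_iff (hper : ∀ k : ℤ, f (k + n) = f k + n)
    (hwindow : ∀ k : ℤ, 1 ≤ k → k ≤ n → 1 ≤ f k ∧ f k ≤ n) (i j : ℤ) :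
    (i, j + (j - i) * n) ∈ InvSet n (gamInv n ∘ f ∘ gam n) ↔ (i, j) ∈ InvSet n f := by
  have hlt : i < j + (j - i) * n ↔ i < j := by
    rw [show j + (j - i) * n = i + (j - i) * (n + 1) by ring, lt_add_iff_pos_right,
      mul_pos_iff_of_pos_right (by positivity), sub_pos]
  have hconj : ∀ d, (gamInv n ∘ f ∘ gam n) (i + d + d * n) = (n + 1) * f (i + d) - n * i := by
    intro d
    rw [gamInv_comp_comp_gam_apply hper hwindow, map_add_mul_of_map_add hper]
    ring
  have hval : (gamInv n ∘ f ∘ gam n) (j + (j - i) * n) < (gamInv n ∘ f ∘ gam n) i ↔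
      f j < f i := by
    have hj := hconj (j - i)
    have hi := hconj 0
    simp only [add_sub_cancel, add_zero, zero_mul] at hj hi
    rw [hj, hi, sub_lt_sub_iff_right, mul_lt_mul_iff_of_pos_left (by positivity)]
  simp only [InvSet, Set.mem_ofPred_eq, hlt, hval]

end Conjugation

lemma injective_add_sub_mul (n : ℕ) :
    Function.Injective (fun p : ℤ × ℤ => (p.1, p.2 + (p.2 - p.1) * n)) := by
  rintro ⟨i, j⟩ ⟨i', j'⟩ h
  simp only [Prod.mk.injEq] at h ⊢
  obtain ⟨rfl, h⟩ := h
  refine ⟨rfl, ?_⟩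
  have : (j - j') * ((n : ℤ) + 1) = 0 := by linear_combination h
  rcases mul_eq_zero.mp this with h | h <;> omega

theorem statement0_general (n : ℕ) (w : Equiv.Perm ℤ)
    (hper : ∀ k : ℤ, w (k + n) = w k + n)
    (hfin : ∀ k : ℤ, 1 ≤ k → k ≤ n → 1 ≤ w k ∧ w k ≤ n) :
    Set.BijOn (fun p : ℤ × ℤ => (p.1, p.2 + (p.2 - p.1) * n))
      (InvSet n ⇑w) (InvSet0 n (gamInv n ∘ ⇑w ∘ gam n)) := by
  have hmem := mem_invSet_gamInv_comp_comp_gam_iff hper hfin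
  refine ⟨fun ⟨i, j⟩ hij => ⟨(hmem i j).2 hij, j - i, by ring⟩,
    (injective_add_sub_mul n).injOn, ?_⟩
  rintro ⟨i, J⟩ ⟨hiJ, d, hd⟩
  have hJ : i + d + (i + d - i) * n = J := by linear_combination -hd
  exact ⟨(i, i + d), (hmem i (i + d)).1 (by rw [hJ]; exact hiJ), Prod.ext rfl hJ⟩

theorem statement0 (n : ℕ) (hn : 2 ≤ n) (w : Equiv.Perm ℤ)
    (hper : ∀ k : ℤ, w (k + n) = w k + n)
    (hfin : ∀ k : ℤ, 1 ≤ k → k ≤ n → 1 ≤ w k ∧ w k ≤ n) :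
    Set.BijOn (fun p : ℤ × ℤ => (p.1, p.2 + (p.2 - p.1) * n))
      (InvSet n ⇑w) (InvSet0 n (gamInv n ∘ ⇑w ∘ gam n)) :=
  statement0_general n w hper hfin
end

section
/- Let n ≥ 2 and let w ∈ S_n ⊆ Ŝ_n (so w is a bijection of ℤ with w(k+n) = w(k)+n mapping {1,…,n} to itself). Then the map (i,j) ↦ (i, j + (j−i+1)·n) is a bijection from the inversion set Inv(w) onto the set Inv_∞(γ⁻¹wγ) of singular inversions of γ⁻¹wγ. -/
/-- The singular inversions: inversions `(i,j)` with `j − i ≡ n mod (n+1)`. -/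
def InvSetInf (n : ℕ) (u : ℤ → ℤ) : Set (ℤ × ℤ) :=
  {p ∈ InvSet n u | (p.2 - p.1) % ((n : ℤ) + 1) = (n : ℤ)}

theorem apply_add_mul_of_apply_add {f : ℤ → ℤ} {c : ℤ} (hf : ∀ k, f (k + c) = f k + c)
    (t k : ℤ) : f (k + t * c) = f k + t * c := by
  have hper : Function.Periodic (fun k => f k - k) c := fun k => by simp only [hf]; ring
  have := hper.int_mul t k
  rw [Int.cast_id] at this
  linarith

theorem Int.sub_one_emod_eq_of_modEq {n x y : ℤ} (h : x ≡ y [ZMOD n]) (hy₁ : 1 ≤ y)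
    (hy₂ : y ≤ n) : (x - 1) % n = y - 1 :=
  Eq.trans (h.sub_right 1) (Int.emod_eq_of_lt (by omega) (by omega))

theorem gamInv_apply_gam {n : ℕ} {f : ℤ → ℤ} (hper : ∀ k : ℤ, f (k + n) = f k + n)
    (hfin : ∀ k : ℤ, 1 ≤ k → k ≤ n → 1 ≤ f k ∧ f k ≤ n) (m : ℤ) :
    gamInv n (f (gam n m)) = ((n : ℤ) + 1) * f m - n * m := by
  rcases Nat.eq_zero_or_pos n with rfl | hn
  · simp [gam, gamInv]
  have hn' : (0 : ℤ) < n := by exact_mod_cast hn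
  set r := (m - 1) % (n : ℤ)
  set t := (m - 1) / (n : ℤ)
  have hdiv : (n : ℤ) * t + r = m - 1 := Int.mul_ediv_add_emod _ _
  have hr₀ : 0 ≤ r := Int.emod_nonneg _ hn'.ne'
  have hrn : r < n := Int.emod_lt_of_pos _ hn'
  set k := 1 + r
  have hm : m = k + t * n := by linear_combination -hdiv
  have hfm : f m = f k + t * n := hm ▸ apply_add_mul_of_apply_add hper t k
  have hfg : f (gam n m) = f k + (t - r) * n := by
    have : gam n m = m + (-r) * n := by unfold gam; ring
    rw [this, apply_add_mul_of_apply_add hper, hfm]; ring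
  have hk := hfin k (by omega) (by omega)
  have hmod : (f (gam n m) - 1) % n = f k - 1 :=
    Int.sub_one_emod_eq_of_modEq (by rw [hfg]; exact Int.add_mul_emod_self_right _ _ _)
      hk.1 hk.2
  rw [gamInv, hmod, hfg, hfm, hm]; ring

theorem shift_injective (n : ℕ) :
    Function.Injective (fun p : ℤ × ℤ => (p.1, p.2 + (p.2 - p.1 + 1) * n)) := by
  rintro ⟨i, j⟩ ⟨i', j'⟩ h
  obtain ⟨rfl, h⟩ := Prod.mk.inj h
  have : j * ((n : ℤ) + 1) = j' * ((n : ℤ) + 1) := by linear_combination h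
  rw [mul_right_cancel₀ (by positivity) this]

theorem shift_sub_emod (n : ℕ) (i j : ℤ) :
    (j + (j - i + 1) * n - i) % ((n : ℤ) + 1) = n := by
  rw [show j + (j - i + 1) * n - i = n + ((n : ℤ) + 1) * (j - i) by ring,
    Int.add_mul_emod_self_left]
  exact Int.emod_eq_of_lt (by positivity) (by omega)

theorem exists_shift_eq_of_sub_emod {n : ℕ} {i j' : ℤ} (h : (j' - i) % ((n : ℤ) + 1) = n) :
    ∃ j, j + (j - i + 1) * n = j' := by
  refine ⟨i + (j' - i) / ((n : ℤ) + 1), ?_⟩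
  have hdiv := Int.mul_ediv_add_emod (j' - i) ((n : ℤ) + 1)
  rw [h] at hdiv
  linear_combination hdiv

theorem mem_invSetInf_conj_gam_iff {n : ℕ} {f : ℤ → ℤ} (hper : ∀ k : ℤ, f (k + n) = f k + n)
    (hfin : ∀ k : ℤ, 1 ≤ k → k ≤ n → 1 ≤ f k ∧ f k ≤ n) (i j : ℤ) :
    (i, j + (j - i + 1) * n) ∈ InvSetInf n (gamInv n ∘ f ∘ gam n) ↔ (i, j) ∈ InvSet n f := by
  have hconj : ∀ m, (gamInv n ∘ f ∘ gam n) m = ((n : ℤ) + 1) * f m - n * m :=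
    gamInv_apply_gam hper hfin
  have hshift : f (j + (j - i + 1) * n) = f j + (j - i + 1) * n :=
    apply_add_mul_of_apply_add hper _ _
  have hinv : (gamInv n ∘ f ∘ gam n) (j + (j - i + 1) * n) < (gamInv n ∘ f ∘ gam n) i ↔
      f j < f i := by
    rw [hconj, hconj, hshift]
    constructor <;> intro h <;> nlinarith
  simp only [InvSetInf, InvSet, Set.mem_ofPred_eq, shift_sub_emod, and_true, hinv]
  constructor
  · rintro ⟨hi₁, hin, hij', hfij⟩
    refine ⟨hi₁, hin, ?_, hfij⟩
    rcases lt_trichotomy i j with hij | rfl | hji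
    · exact hij
    · exact absurd hfij (lt_irrefl _)
    · nlinarith
  · rintro ⟨hi₁, hin, hij, hfij⟩
    exact ⟨hi₁, hin, by nlinarith, hfij⟩

theorem statement1_general (n : ℕ) (w : Equiv.Perm ℤ)
    (hper : ∀ k : ℤ, w (k + n) = w k + n)
    (hfin : ∀ k : ℤ, 1 ≤ k → k ≤ n → 1 ≤ w k ∧ w k ≤ n) :
    Set.BijOn (fun p : ℤ × ℤ => (p.1, p.2 + (p.2 - p.1 + 1) * n))
      (InvSet n ⇑w) (InvSetInf n (gamInv n ∘ ⇑w ∘ gam n)) := by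
  refine ⟨fun p hp => (mem_invSetInf_conj_gam_iff hper hfin p.1 p.2).2 hp,
    (shift_injective n).injOn, ?_⟩
  rintro ⟨i, j'⟩ hp
  obtain ⟨j, rfl⟩ := exists_shift_eq_of_sub_emod (i := i) (j' := j') hp.2
  exact ⟨(i, j), (mem_invSetInf_conj_gam_iff hper hfin i j).1 hp, rfl⟩

theorem statement1 (n : ℕ) (hn : 2 ≤ n) (w : Equiv.Perm ℤ)
    (hper : ∀ k : ℤ, w (k + n) = w k + n)
    (hfin : ∀ k : ℤ, 1 ≤ k → k ≤ n → 1 ≤ w k ∧ w k ≤ n) :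
    Set.BijOn (fun p : ℤ × ℤ => (p.1, p.2 + (p.2 - p.1 + 1) * n))
      (InvSet n ⇑w) (InvSetInf n (gamInv n ∘ ⇑w ∘ gam n)) :=
  statement1_general n w hper hfin
end

section
/- Let n ≥ 2 and 1 ≤ i ≤ n−1, and let s_i ∈ S_n ⊆ Ŝ_n be the periodically extended simple transposition, i.e. the bijection of ℤ with s_i(k) = k+1 if k ≡ i mod n, s_i(k) = k−1 if k ≡ i+1 mod n, and s_i(k) = k otherwise. Then the element u = γ⁻¹ ∘ s_i ∘ γ of Ŝ_n satisfies u(i) = i+1+n, u(i+1) = i−n, and u(k) = k for all k ∈ {1,…,n} \ {i, i+1}; moreover the inversion set Inv(u) has exactly 2n−1 elements (i.e. γ⁻¹ s_i γ has length 2n−1 in Ŝ_n). -/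
/-- The periodically extended simple transposition `s_i`: `s_i(k) = k+1` if
`k ≡ i mod n`, `s_i(k) = k−1` if `k ≡ i+1 mod n`, and `s_i(k) = k` otherwise. -/
def sfun (n : ℕ) (i : ℕ) (k : ℤ) : ℤ :=
  if (k - (i : ℤ)) % (n : ℤ) = 0 then k + 1
  else if (k - ((i : ℤ) + 1)) % (n : ℤ) = 0 then k - 1
  else k

namespace Int

theorem eq_of_dvd_sub_of_lt_of_lt {n b c : ℤ} (h : n ∣ b - c) (h₁ : c - n < b) (h₂ : b < c + n) :
    b = c :=
  sub_eq_zero.mp (Int.eq_zero_of_abs_lt_dvd h (abs_lt.mpr ⟨by linarith, by linarith⟩))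

theorem emod_eq_of_dvd_sub {n k c : ℤ} (h : n ∣ k - c) (h₀ : 0 ≤ c) (hc : c < n) : k % n = c :=
  (Int.emod_eq_emod_iff_emod_sub_eq_zero.mpr (Int.emod_eq_zero_of_dvd h)).trans
    (Int.emod_eq_of_lt h₀ hc)

end Int

theorem dvd_gam_sub_iff (n : ℕ) (k c : ℤ) : (n : ℤ) ∣ gam n k - c ↔ (n : ℤ) ∣ k - c := by
  rw [gam, sub_right_comm, dvd_sub_left (dvd_mul_right _ _)]

theorem gamInv_gam_add (n : ℕ) (k d : ℤ) :
    gamInv n (gam n k + d) = k + d + n * ((k - 1 + d) % n - (k - 1) % n) := by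
  have hres : (gam n k + d - 1) % n = (k - 1 + d) % n := by
    rw [gam, show k - n * ((k - 1) % n) + d - 1 = k - 1 + d + n * -((k - 1) % n) by ring,
      Int.add_mul_emod_self_left]
  rw [gamInv, hres, gam]
  ring

theorem sfun_gam (n i : ℕ) (k : ℤ) :
    sfun n i (gam n k) =
      gam n k + if (n : ℤ) ∣ k - i then 1 else if (n : ℤ) ∣ k - (i + 1) then -1 else 0 := by
  simp only [sfun, ← Int.dvd_iff_emod_eq_zero, dvd_gam_sub_iff]
  split_ifs <;> ring

def gamConj (n i : ℕ) : ℤ → ℤ := gamInv n ∘ sfun n i ∘ gam n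

section gamConj

variable {n i : ℕ} {k : ℤ}

theorem gamConj_of_dvd_sub (hi : 1 ≤ i) (hin : i < n) (h : (n : ℤ) ∣ k - i) :
    gamConj n i k = k + 1 + n := by
  have hk : k % n = i := Int.emod_eq_of_dvd_sub h (by omega) (by omega)
  have hk' : (k - 1) % n = i - 1 :=
    Int.emod_eq_of_dvd_sub (by rwa [sub_sub_sub_cancel_right]) (by omega) (by omega)
  rw [gamConj, Function.comp_apply, Function.comp_apply, sfun_gam, if_pos h, gamInv_gam_add,
    sub_add_cancel, hk, hk']
  ring

theorem gamConj_of_dvd_sub_succ (hi : 1 ≤ i) (hin : i < n) (h : (n : ℤ) ∣ k - (i + 1)) :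
    gamConj n i k = k - 1 - n := by
  have hni : ¬ (n : ℤ) ∣ k - i := fun h' => by
    have := Int.le_of_dvd one_pos (by simpa using dvd_sub h' h)
    omega
  have hk : (k - 1) % n = i :=
    Int.emod_eq_of_dvd_sub (by rwa [sub_sub, add_comm 1]) (by omega) (by omega)
  have hk' : (k - 1 + -1) % n = i - 1 :=
    Int.emod_eq_of_dvd_sub (by convert h using 1; ring) (by omega) (by omega)
  rw [gamConj, Function.comp_apply, Function.comp_apply, sfun_gam, if_neg hni, if_pos h,
    gamInv_gam_add, hk, hk']
  ring

theorem gamConj_of_not_dvd (h₁ : ¬ (n : ℤ) ∣ k - i) (h₂ : ¬ (n : ℤ) ∣ k - (i + 1)) :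
    gamConj n i k = k := by
  simpa [gamConj, sfun_gam, h₁, h₂] using gamInv_gam_add n k 0

theorem gamConj_trichotomy (hi : 1 ≤ i) (hin : i < n) (k : ℤ) :
    ((n : ℤ) ∣ k - i ∧ gamConj n i k = k + 1 + n) ∨
      ((n : ℤ) ∣ k - (i + 1) ∧ gamConj n i k = k - 1 - n) ∨
      (¬ (n : ℤ) ∣ k - i ∧ ¬ (n : ℤ) ∣ k - (i + 1) ∧ gamConj n i k = k) := by
  by_cases h₁ : (n : ℤ) ∣ k - i
  · exact .inl ⟨h₁, gamConj_of_dvd_sub hi hin h₁⟩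
  by_cases h₂ : (n : ℤ) ∣ k - (i + 1)
  · exact .inr (.inl ⟨h₂, gamConj_of_dvd_sub_succ hi hin h₂⟩)
  exact .inr (.inr ⟨h₁, h₂, gamConj_of_not_dvd h₁ h₂⟩)

theorem gamConj_eq_self (h₁ : (i : ℤ) + 1 - n < k) (h₂ : k < i + n) (hk : k ≠ i)
    (hk' : k ≠ i + 1) : gamConj n i k = k :=
  gamConj_of_not_dvd (fun h => hk (Int.eq_of_dvd_sub_of_lt_of_lt h (by omega) h₂))
    (fun h => hk' (Int.eq_of_dvd_sub_of_lt_of_lt h h₁ (by omega)))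

theorem sub_one_sub_le_gamConj (hi : 1 ≤ i) (hin : i < n) (k : ℤ) : k - 1 - n ≤ gamConj n i k := by
  rcases gamConj_trichotomy hi hin k with ⟨-, h⟩ | ⟨-, h⟩ | ⟨-, -, h⟩ <;> omega

end gamConj

section inversions

variable {n i : ℕ} {a b : ℤ}

theorem lt_and_gamConj_lt_gamConj_self_iff (hi : 1 ≤ i) (hin : i < n) :
    (i : ℤ) < b ∧ gamConj n i b < gamConj n i i ↔
      ((i : ℤ) < b ∧ b < i + n) ∨ b = i + 1 + n ∨ b = i + 1 + 2 * n := by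
  rw [gamConj_of_dvd_sub (k := i) hi hin (by simp)]
  constructor
  · rintro ⟨hib, hb⟩
    rcases gamConj_trichotomy hi hin b with ⟨hd, h⟩ | ⟨⟨q, hq⟩, h⟩ | ⟨hd, -, h⟩
    · have := Int.le_of_dvd (by omega) hd
      omega
    · have hq₀ : 0 ≤ q := by nlinarith
      have hq₂ : q ≤ 2 := by nlinarith
      interval_cases q <;> omega
    · have : b ≠ i + n := by rintro rfl; simp at hd
      omega
  · rintro (⟨hib, hb⟩ | rfl | rfl)
    · refine ⟨hib, ?_⟩
      rcases eq_or_ne b (i + 1) with rfl | hb'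
      · rw [gamConj_of_dvd_sub_succ (k := i + 1) hi hin (by simp)]
        omega
      · rw [gamConj_eq_self (by omega) hb (by omega) hb']
        omega
    · rw [gamConj_of_dvd_sub_succ (k := i + 1 + n) hi hin ⟨1, by ring⟩]
      omega
    · rw [gamConj_of_dvd_sub_succ (k := i + 1 + 2 * n) hi hin ⟨2, by ring⟩]
      omega

theorem not_gamConj_lt_gamConj_succ (hi : 1 ≤ i) (hin : i < n) (hb : (i : ℤ) + 1 < b) :
    ¬ gamConj n i b < gamConj n i (i + 1) := by
  rw [gamConj_of_dvd_sub_succ (k := i + 1) hi hin (by simp)]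
  have := sub_one_sub_le_gamConj hi hin b
  omega

theorem dvd_sub_succ_of_gamConj_lt (hi : 1 ≤ i) (hin : i < n) (hab : a < b)
    (h : gamConj n i b < a) : (n : ℤ) ∣ b - (i + 1) ∧ b < a + n + 1 := by
  rcases gamConj_trichotomy hi hin b with ⟨-, hb⟩ | ⟨hd, hb⟩ | ⟨-, -, hb⟩
  · omega
  · exact ⟨hd, by omega⟩
  · omega

theorem lt_and_gamConj_lt_of_lt_iff (hi : 1 ≤ i) (hin : i < n) (ha₁ : 1 ≤ a) (ha : a < i) :
    a < b ∧ gamConj n i b < a ↔ b = i + 1 := by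
  constructor
  · rintro ⟨hab, h⟩
    obtain ⟨hd, hb⟩ := dvd_sub_succ_of_gamConj_lt hi hin hab h
    exact Int.eq_of_dvd_sub_of_lt_of_lt hd (by omega) (by omega)
  · rintro rfl
    rw [gamConj_of_dvd_sub_succ (k := i + 1) hi hin (by simp)]
    omega

theorem lt_and_gamConj_lt_of_succ_lt_iff (hi : 1 ≤ i) (hin : i < n) (ha : (i : ℤ) + 1 < a)
    (ha₂ : a ≤ n) : a < b ∧ gamConj n i b < a ↔ b = i + 1 + n := by
  constructor
  · rintro ⟨hab, h⟩
    obtain ⟨hd, hb⟩ := dvd_sub_succ_of_gamConj_lt hi hin hab h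
    refine Int.eq_of_dvd_sub_of_lt_of_lt (n := n) ?_ (by omega) (by omega)
    rwa [← sub_sub, dvd_sub_self_right]
  · rintro rfl
    rw [gamConj_of_dvd_sub_succ (k := i + 1 + n) hi hin ⟨1, by ring⟩]
    omega

theorem invSet_gamConj (hi : 1 ≤ i) (hin : i < n) :
    InvSet n (gamConj n i) =
      ↑({(i : ℤ)} ×ˢ (Finset.Ioo (i : ℤ) (i + n) ∪ {(i : ℤ) + 1 + n, (i : ℤ) + 1 + 2 * n}) ∪
        (Finset.Ico 1 (i : ℤ) ×ˢ {(i : ℤ) + 1} ∪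
          Finset.Ioc ((i : ℤ) + 1) n ×ˢ {(i : ℤ) + 1 + n})) := by
  ext ⟨a, b⟩
  simp only [InvSet, Set.mem_ofPred_eq, Finset.coe_union, Finset.coe_product, Set.mem_union,
    Set.mem_prod, Finset.coe_singleton, Set.mem_singleton_iff, Finset.coe_Ioo, Finset.coe_Ico,
    Finset.coe_Ioc, Finset.coe_insert, Set.mem_insert_iff, Set.mem_Ioo, Set.mem_Ico, Set.mem_Ioc]
  constructor
  · rintro ⟨ha₁, ha₂, hab, hu⟩
    rcases lt_trichotomy a i with ha | rfl | ha
    · rw [gamConj_eq_self (k := a) (by omega) (by omega) (by omega) (by omega)] at hu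
      exact .inr (.inl ⟨⟨ha₁, ha⟩, (lt_and_gamConj_lt_of_lt_iff hi hin ha₁ ha).1 ⟨hab, hu⟩⟩)
    · exact .inl ⟨rfl, (lt_and_gamConj_lt_gamConj_self_iff hi hin).1 ⟨hab, hu⟩⟩
    · rcases (show a = i + 1 ∨ (i : ℤ) + 1 < a by omega) with rfl | ha
      · exact absurd hu (not_gamConj_lt_gamConj_succ hi hin hab)
      rw [gamConj_eq_self (k := a) (by omega) (by omega) (by omega) (by omega)] at hu
      exact .inr (.inr ⟨⟨ha, ha₂⟩, (lt_and_gamConj_lt_of_succ_lt_iff hi hin ha ha₂).1 ⟨hab, hu⟩⟩)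
  · rintro (⟨rfl, hb⟩ | ⟨⟨ha₁, ha⟩, hb⟩ | ⟨⟨ha, ha₂⟩, hb⟩)
    · obtain ⟨hab, hu⟩ := (lt_and_gamConj_lt_gamConj_self_iff hi hin).2 hb
      exact ⟨by omega, by omega, hab, hu⟩
    · obtain ⟨hab, hu⟩ := (lt_and_gamConj_lt_of_lt_iff hi hin ha₁ ha).2 hb
      rw [gamConj_eq_self (k := a) (by omega) (by omega) (by omega) (by omega)]
      exact ⟨ha₁, by omega, hab, hu⟩
    · obtain ⟨hab, hu⟩ := (lt_and_gamConj_lt_of_succ_lt_iff hi hin ha ha₂).2 hb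
      rw [gamConj_eq_self (k := a) (by omega) (by omega) (by omega) (by omega)]
      exact ⟨by omega, ha₂, hab, hu⟩

theorem ncard_invSet_gamConj (hi : 1 ≤ i) (hin : i < n) :
    (InvSet n (gamConj n i)).ncard = 2 * n - 1 := by
  have hT : Disjoint (Finset.Ioo (i : ℤ) (i + n)) {(i : ℤ) + 1 + n, (i : ℤ) + 1 + 2 * n} := by
    rw [Finset.disjoint_left]
    intro b hb
    simp only [Finset.mem_Ioo, Finset.mem_insert, Finset.mem_singleton] at hb ⊢
    omega
  rw [invSet_gamConj hi hin, Set.ncard_coe_finset, Finset.card_union_of_disjoint,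
    Finset.card_union_of_disjoint, Finset.card_product, Finset.card_product, Finset.card_product,
    Finset.card_union_of_disjoint hT, Finset.card_pair (by omega), Int.card_Ioo, Int.card_Ico,
    Int.card_Ioc]
  · simp only [Finset.card_singleton]
    omega
  all_goals
    rw [Finset.disjoint_left]
    rintro ⟨a, b⟩
    simp only [Finset.mem_union, Finset.mem_product, Finset.mem_singleton, Finset.mem_Ico,
      Finset.mem_Ioc]
    omega

end inversions

theorem statement2_general (n i : ℕ) (hi1 : 1 ≤ i) (hi2 : i ≤ n - 1) :
    (gamInv n ∘ sfun n i ∘ gam n) (i : ℤ) = (i : ℤ) + 1 + n ∧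
    (gamInv n ∘ sfun n i ∘ gam n) ((i : ℤ) + 1) = (i : ℤ) - n ∧
    (∀ k : ℤ, 1 ≤ k → k ≤ (n : ℤ) → k ≠ (i : ℤ) → k ≠ (i : ℤ) + 1 →
      (gamInv n ∘ sfun n i ∘ gam n) k = k) ∧
    (InvSet n (gamInv n ∘ sfun n i ∘ gam n)).ncard = 2 * n - 1 := by
  have hin : i < n := by omega
  refine ⟨gamConj_of_dvd_sub hi1 hin (by simp), ?_,
    fun k hk₁ hk₂ hki hki' => gamConj_eq_self (by omega) (by omega) hki hki',
    ncard_invSet_gamConj hi1 hin⟩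
  rw [← gamConj, gamConj_of_dvd_sub_succ hi1 hin (by simp)]
  ring

theorem statement2 (n i : ℕ) (hn : 2 ≤ n) (hi1 : 1 ≤ i) (hi2 : i ≤ n - 1) :
    (gamInv n ∘ sfun n i ∘ gam n) (i : ℤ) = (i : ℤ) + 1 + n ∧
    (gamInv n ∘ sfun n i ∘ gam n) ((i : ℤ) + 1) = (i : ℤ) - n ∧
    (∀ k : ℤ, 1 ≤ k → k ≤ (n : ℤ) → k ≠ (i : ℤ) → k ≠ (i : ℤ) + 1 →
      (gamInv n ∘ sfun n i ∘ gam n) k = k) ∧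
    (InvSet n (gamInv n ∘ sfun n i ∘ gam n)).ncard = 2 * n - 1 :=
  statement2_general n i hi1 hi2
end

section
/- Let n ≥ 2 and define b^ρ : ℤ → ℤ by b^ρ(j) = ((j−1) mod n) − ⌊(j−1)/n⌋. Then for every u ∈ Ŝ_n one has b^ρ ∘ u = b^ρ if and only if γ ∘ u ∘ γ⁻¹ ∈ S_n; in other words, the stabilizer of the quasi-periodic sequence b^ρ under the action of Ŝ_n (acting by (u·b)(i) = b(u⁻¹(i))) is exactly the conjugate subgroup γ⁻¹ S_n γ. -/
/-- The quasi-periodic sequence `b^ρ(j) = ((j−1) mod n) − ⌊(j−1)/n⌋`. -/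
def brho (n : ℕ) (j : ℤ) : ℤ := (j - 1) % (n : ℤ) - (j - 1) / (n : ℤ)

/-!
The sequence `b^ρ` is quasi-periodic, `b^ρ(k + n m) = b^ρ(k) − m`, and so is `b^ρ ∘ u` for
`u ∈ Ŝ_n`. Every integer is a translate of a zero of `b^ρ`, so `b^ρ ∘ u = b^ρ` holds as soon as
`u` maps the zero set of `b^ρ` into itself. That zero set is `γ⁻¹ {1,…,n}`, because
`γ(j) = 1 + ((j−1) mod n) − n·b^ρ(j)`.
-/

lemma map_add_zsmul_of_map_add {G : Type*} [AddCommGroup G] {f : G → G} {c : G}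
    (hf : ∀ k, f (k + c) = f k + c) (k : G) (m : ℤ) : f (k + m • c) = f k + m • c := by
  have hper : Function.Periodic (fun x => f x - x) c := fun x => by
    simp only [hf]; abel
  have := hper.zsmul m k
  rw [sub_eq_sub_iff_add_eq_add] at this
  rw [← add_left_inj k, this]
  abel

lemma gam_gamInv (n : ℕ) (m : ℤ) : gam n (gamInv n m) = m := by
  have : gamInv n m - 1 = m - 1 + n * ((m - 1) % (n : ℤ)) := by rw [gamInv]; ring
  rw [gam, this, Int.add_mul_emod_self_left, gamInv]
  ring

lemma gamInv_gam (n : ℕ) (j : ℤ) : gamInv n (gam n j) = j := by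
  have : gam n j - 1 = j - 1 + n * -((j - 1) % (n : ℤ)) := by rw [gam]; ring
  rw [gamInv, this, Int.add_mul_emod_self_left, gam]
  ring

lemma brho_add_mul {n : ℕ} (hn : n ≠ 0) (k m : ℤ) : brho n (k + n * m) = brho n k - m := by
  rw [brho, brho, add_sub_right_comm, Int.add_mul_emod_self_left,
    Int.add_mul_ediv_left _ _ (by exact_mod_cast hn)]
  ring

lemma gam_eq_one_add_emod_sub_mul_brho (n : ℕ) (j : ℤ) :
    gam n j = 1 + (j - 1) % (n : ℤ) - n * brho n j := by
  have := Int.emod_add_mul_ediv (j - 1) n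
  rw [gam, brho]
  linarith

lemma gam_mem_Icc_iff_brho_eq_zero {n : ℕ} (hn : 0 < n) (j : ℤ) :
    (1 ≤ gam n j ∧ gam n j ≤ (n : ℤ)) ↔ brho n j = 0 := by
  have hn' : (0 : ℤ) < n := by exact_mod_cast hn
  have hr₀ := Int.emod_nonneg (j - 1) hn'.ne'
  have hr₁ := Int.emod_lt_of_pos (j - 1) hn'
  rw [gam_eq_one_add_emod_sub_mul_brho]
  constructor
  · rintro ⟨h₁, h₂⟩
    rcases lt_trichotomy (brho n j) 0 with hb | hb | hb
    · nlinarith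
    · exact hb
    · nlinarith
  · intro hb
    rw [hb]
    omega

lemma brho_gamInv {n : ℕ} (hn : 0 < n) {k : ℤ} (h₁ : 1 ≤ k) (h₂ : k ≤ n) :
    brho n (gamInv n k) = 0 :=
  (gam_mem_Icc_iff_brho_eq_zero hn _).1 (by rw [gam_gamInv]; exact ⟨h₁, h₂⟩)

lemma brho_comp_eq_iff_mapsTo_zeros {n : ℕ} (hn : n ≠ 0) {u : ℤ → ℤ}
    (hper : ∀ k : ℤ, u (k + n) = u k + n) :
    (∀ k, brho n (u k) = brho n k) ↔ ∀ j, brho n j = 0 → brho n (u j) = 0 := by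
  refine ⟨fun h j hj => (h j).trans hj, fun h k => ?_⟩
  set b := brho n k
  have hzero : brho n (k + n * b) = 0 := by rw [brho_add_mul hn]; ring
  calc brho n (u k) = brho n (u k + n * b) + b := by rw [brho_add_mul hn]; ring
    _ = brho n (u (k + n * b)) + b := by
      rw [mul_comm, ← smul_eq_mul, map_add_zsmul_of_map_add hper]
    _ = b := by rw [h _ hzero, zero_add]

theorem statement3 (n : ℕ) (hn : 2 ≤ n) (u : Equiv.Perm ℤ)
    (hper : ∀ k : ℤ, u (k + n) = u k + n) :
    (∀ k : ℤ, brho n (u k) = brho n k) ↔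
      (∀ k : ℤ, 1 ≤ k → k ≤ (n : ℤ) →
        1 ≤ gam n (u (gamInv n k)) ∧ gam n (u (gamInv n k)) ≤ (n : ℤ)) := by
  have hn₀ : 0 < n := by omega
  simp_rw [brho_comp_eq_iff_mapsTo_zeros hn₀.ne' hper, gam_mem_Icc_iff_brho_eq_zero hn₀]
  constructor
  · intro h k h₁ h₂
    exact h _ (brho_gamInv hn₀ h₁ h₂)
  · intro h j hj
    obtain ⟨h₁, h₂⟩ := (gam_mem_Icc_iff_brho_eq_zero hn₀ j).2 hj
    simpa only [gamInv_gam] using h _ h₁ h₂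
end

section
/- Let κ be a commutative ring, N ≥ 1, V = κ^N with standard basis e_1,…,e_N, and let a, b ∈ κ^N with A, B ∈ M_N(κ) the diagonal matrices diag(a₁,…,a_N) and diag(b₁,…,b_N). For a polynomial p ∈ κ[x₁,…,x_N, y₁,…,y_N], let p_{A,B} ∈ End_κ(V^{⊗N}) be the image of p under the κ-algebra homomorphism sending x_i to the operator acting by A in the i-th tensor factor (and by the identity in all other factors) and y_i to the operator acting by B in the i-th tensor factor; these 2N operators pairwise commute, so this algebra homomorphism is well defined. Let z = Σ_{σ ∈ S_N} sgn(σ) · e_{σ(1)} ⊗ ⋯ ⊗ e_{σ(N)} ∈ V^{⊗N}. If p is invariant under the diagonal S_N-action on the variables (i.e. p(x_{σ(1)},…,x_{σ(N)}, y_{σ(1)},…,y_{σ(N)}) = p for every σ ∈ S_N), then p_{A,B}(z) = p(a₁,…,a_N, b₁,…,b_N) · z. -/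
/-!
Each basis tensor `e_{σ(1)} ⊗ ⋯ ⊗ e_{σ(N)}` is a simultaneous eigenvector of all the operators
`x_i ↦ A` in factor `i` and `y_i ↦ B` in factor `i`, with eigenvalues `a_{σ(i)}` and `b_{σ(i)}`;
hence `p_{A,B}` acts on it by the scalar `p(a ∘ σ, b ∘ σ)`. Diagonal invariance of `p` makes this
scalar `p(a, b)` for every `σ`, so `p_{A,B}` acts on the alternating sum `z` by `p(a, b)` as well.
-/

noncomputable section

/-- The diagonal matrix `diag(c₁,…,c_N)` as an endomorphism of `κ^N`. -/
def diagOp (κ : Type) [CommRing κ] (N : ℕ) (c : Fin N → κ) :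
    (Fin N → κ) →ₗ[κ] (Fin N → κ) :=
  LinearMap.pi fun r => c r • LinearMap.proj r

/-- The operator on `V^{⊗N}` acting by `f` in the `i`-th tensor factor and by
the identity in all other factors. -/
def factorOp (κ : Type) [CommRing κ] (N : ℕ) (i : Fin N)
    (f : (Fin N → κ) →ₗ[κ] (Fin N → κ)) :
    Module.End κ (PiTensorProduct κ (fun _ : Fin N => Fin N → κ)) :=
  PiTensorProduct.map (Function.update (fun _ : Fin N => LinearMap.id) i f)

/-- The alternating tensor `z = Σ_{σ ∈ S_N} sgn(σ) · e_{σ(1)} ⊗ ⋯ ⊗ e_{σ(N)}`. -/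
def altZ (κ : Type) [CommRing κ] (N : ℕ) :
    PiTensorProduct κ (fun _ : Fin N => Fin N → κ) :=
  ∑ σ : Equiv.Perm (Fin N), ((Equiv.Perm.sign σ : ℤ) : κ) •
    PiTensorProduct.tprod κ (fun i => Pi.single (σ i) (1 : κ))

theorem MvPolynomial.algHom_apply_eq_eval_smul {R σ M : Type*} [CommSemiring R]
    [AddCommMonoid M] [Module R M] (φ : MvPolynomial σ R →ₐ[R] Module.End R M) {v : M}
    {w : σ → R} (hX : ∀ s, φ (X s) v = w s • v) (p : MvPolynomial σ R) :
    φ p v = eval w p • v := by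
  induction p using MvPolynomial.induction_on with
  | C r => simp [MvPolynomial.algHom_C, Module.algebraMap_end_apply]
  | add q r hq hr => simp only [map_add, LinearMap.add_apply, hq, hr, add_smul]
  | mul_X q s hq =>
    rw [map_mul, Module.End.mul_apply, hX s, map_smul, hq, map_mul, eval_X, mul_smul, smul_comm]

section TensorPower

variable {κ : Type} [CommRing κ] {N : ℕ}

theorem diagOp_single (c : Fin N → κ) (r : Fin N) (x : κ) :
    diagOp κ N c (Pi.single r x) = c r • Pi.single r x := by
  ext j
  by_cases hj : j = r
  · subst hj; simp [diagOp]
  · simp [diagOp, Pi.single_eq_of_ne hj]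

theorem factorOp_tprod_of_apply_eq_smul (i : Fin N) (f : (Fin N → κ) →ₗ[κ] (Fin N → κ))
    (v : Fin N → Fin N → κ) {c : κ} (hv : f (v i) = c • v i) :
    factorOp κ N i f (PiTensorProduct.tprod κ v) = c • PiTensorProduct.tprod κ v := by
  have hupdate : (fun j => Function.update (fun _ => LinearMap.id) i f j (v j)) =
      Function.update v i (c • v i) := by
    funext j
    by_cases hj : j = i
    · subst hj; simp [hv]
    · simp [Function.update_of_ne hj]
  rw [factorOp, PiTensorProduct.map_tprod, hupdate, MultilinearMap.map_update_smul,
    Function.update_eq_self]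

theorem factorOp_diagOp_tprod_single (c : Fin N → κ) (i : Fin N) (σ : Equiv.Perm (Fin N)) :
    factorOp κ N i (diagOp κ N c) (PiTensorProduct.tprod κ fun j => Pi.single (σ j) 1) =
      c (σ i) • PiTensorProduct.tprod κ fun j => Pi.single (σ j) 1 :=
  factorOp_tprod_of_apply_eq_smul i _ _ (diagOp_single c (σ i) 1)

end TensorPower

theorem statement4_general (κ : Type) [CommRing κ] (N : ℕ)
    (a b : Fin N → κ)
    (φ : MvPolynomial (Fin N ⊕ Fin N) κ →ₐ[κ]
        Module.End κ (PiTensorProduct κ (fun _ : Fin N => Fin N → κ)))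
    (hφa : ∀ i : Fin N, φ (MvPolynomial.X (Sum.inl i)) = factorOp κ N i (diagOp κ N a))
    (hφb : ∀ i : Fin N, φ (MvPolynomial.X (Sum.inr i)) = factorOp κ N i (diagOp κ N b))
    (p : MvPolynomial (Fin N ⊕ Fin N) κ)
    (hp : ∀ σ : Equiv.Perm (Fin N), MvPolynomial.rename (Sum.map ⇑σ ⇑σ) p = p) :
    φ p (altZ κ N) = MvPolynomial.eval (Sum.elim a b) p • altZ κ N := by
  have eigen (σ : Equiv.Perm (Fin N)) :
      φ p (PiTensorProduct.tprod κ fun j => Pi.single (σ j) 1) =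
        MvPolynomial.eval (Sum.elim a b) p • PiTensorProduct.tprod κ fun j => Pi.single (σ j) 1 := by
    have hX : ∀ s, φ (MvPolynomial.X s) (PiTensorProduct.tprod κ fun j => Pi.single (σ j) 1) =
        Sum.elim (a ∘ σ) (b ∘ σ) s • PiTensorProduct.tprod κ fun j => Pi.single (σ j) 1 := by
      rintro (i | i)
      · rw [hφa i]; exact factorOp_diagOp_tprod_single a i σ
      · rw [hφb i]; exact factorOp_diagOp_tprod_single b i σ
    rw [MvPolynomial.algHom_apply_eq_eval_smul φ hX, ← Sum.elim_comp_map,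
      ← MvPolynomial.eval_rename, hp σ]
  rw [altZ, map_sum, Finset.smul_sum]
  exact Finset.sum_congr rfl fun σ _ => by rw [map_smul, eigen, smul_comm]

theorem statement4 (κ : Type) [CommRing κ] (N : ℕ) (hN : 1 ≤ N)
    (a b : Fin N → κ)
    (φ : MvPolynomial (Fin N ⊕ Fin N) κ →ₐ[κ]
        Module.End κ (PiTensorProduct κ (fun _ : Fin N => Fin N → κ)))
    (hφa : ∀ i : Fin N, φ (MvPolynomial.X (Sum.inl i)) = factorOp κ N i (diagOp κ N a))
    (hφb : ∀ i : Fin N, φ (MvPolynomial.X (Sum.inr i)) = factorOp κ N i (diagOp κ N b))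
    (p : MvPolynomial (Fin N ⊕ Fin N) κ)
    (hp : ∀ σ : Equiv.Perm (Fin N), MvPolynomial.rename (Sum.map ⇑σ ⇑σ) p = p) :
    φ p (altZ κ N) = MvPolynomial.eval (Sum.elim a b) p • altZ κ N :=
  statement4_general κ N a b φ hφa hφb p hp

end
end

section
/- Let 1^N denote the one-dimensional K[Y^{±}]-module on which every Y_i acts by 1. Then the endomorphism algebra End_D(D ⊗_{K[Y^{±}]} 1^N) is isomorphic as a K-algebra to the opposite K[S_N]^op of the group algebra of the symmetric group S_N. -/
/-!
Statement 11: Let `K` be a field of characteristic zero, `q ∈ K^×` not a root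
of unity, and `D = D_q(H) # S_N` the smash product of the quantum torus with
the symmetric group (presented by generators `X_i^{±1}`, `Y_i^{±1}`, `s_w` and
the listed relations).  Let `1^N` be the one-dimensional `K[Y^{±}]`-module on
which every `Y_i` acts by `1`.  Then `End_D(D ⊗_{K[Y^{±}]} 1^N)` is isomorphic
as a `K`-algebra to `K[S_N]^op`.

The induced module `D ⊗_{K[Y^{±}]} 1^N` is realized as the quotient of `D` by
the left ideal generated by the elements `Y_i − 1` and `Y_i^{-1} − 1`.
-/

noncomputable section

/-- Generators of the smash product `D = D_q(H) # S_N`. -/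
inductive SGen (N : ℕ) : Type
  | X : Fin N → SGen N
  | Xinv : Fin N → SGen N
  | Y : Fin N → SGen N
  | Yinv : Fin N → SGen N
  | S : Equiv.Perm (Fin N) → SGen N

/-- The generator embedding into the free algebra. -/
def sg (K : Type) [Field K] {N : ℕ} (g : SGen N) : FreeAlgebra K (SGen N) :=
  FreeAlgebra.ι K g

/-- The defining relations of the smash product `D_q(H) # S_N`:
the `X_i` pairwise commute and are invertible, the `Y_i` pairwise commute and
are invertible, `Y_i X_j = X_j Y_i` for `i ≠ j`, `Y_i X_i = q X_i Y_i`,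
`s_w s_{w'} = s_{ww'}`, `s_id = 1`, `s_w X_i s_w^{-1} = X_{w(i)}` and
`s_w Y_i s_w^{-1} = Y_{w(i)}`. -/
inductive SRel (K : Type) [Field K] (N : ℕ) (q : Kˣ) :
    FreeAlgebra K (SGen N) → FreeAlgebra K (SGen N) → Prop
  | XX (i j : Fin N) :
      SRel K N q (sg K (.X i) * sg K (.X j)) (sg K (.X j) * sg K (.X i))
  | XXinv (i : Fin N) : SRel K N q (sg K (.X i) * sg K (.Xinv i)) 1
  | XinvX (i : Fin N) : SRel K N q (sg K (.Xinv i) * sg K (.X i)) 1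
  | YY (i j : Fin N) :
      SRel K N q (sg K (.Y i) * sg K (.Y j)) (sg K (.Y j) * sg K (.Y i))
  | YYinv (i : Fin N) : SRel K N q (sg K (.Y i) * sg K (.Yinv i)) 1
  | YinvY (i : Fin N) : SRel K N q (sg K (.Yinv i) * sg K (.Y i)) 1
  | YXne (i j : Fin N) (h : i ≠ j) :
      SRel K N q (sg K (.Y i) * sg K (.X j)) (sg K (.X j) * sg K (.Y i))
  | YXeq (i : Fin N) :
      SRel K N q (sg K (.Y i) * sg K (.X i)) ((q : K) • (sg K (.X i) * sg K (.Y i)))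
  | Smul (w w' : Equiv.Perm (Fin N)) :
      SRel K N q (sg K (.S w) * sg K (.S w')) (sg K (.S (w * w')))
  | Sone : SRel K N q (sg K (.S 1)) 1
  | SX (w : Equiv.Perm (Fin N)) (i : Fin N) :
      SRel K N q (sg K (.S w) * sg K (.X i)) (sg K (.X (w i)) * sg K (.S w))
  | SY (w : Equiv.Perm (Fin N)) (i : Fin N) :
      SRel K N q (sg K (.S w) * sg K (.Y i)) (sg K (.Y (w i)) * sg K (.S w))

/-- The smash product `D = D_q(H) # S_N`, presented by generators and relations. -/
abbrev SmashD (K : Type) [Field K] (N : ℕ) (q : Kˣ) := RingQuot (SRel K N q)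

/-- The element `Y_i` of `D`. -/
def Ye (K : Type) [Field K] {N : ℕ} (q : Kˣ) (i : Fin N) : SmashD K N q :=
  RingQuot.mkAlgHom K (SRel K N q) (sg K (.Y i))

/-- The element `Y_i^{-1}` of `D`. -/
def YeInv (K : Type) [Field K] {N : ℕ} (q : Kˣ) (i : Fin N) : SmashD K N q :=
  RingQuot.mkAlgHom K (SRel K N q) (sg K (.Yinv i))

/-- The left ideal of `D` presenting the induced module `D ⊗_{K[Y^{±}]} 1^N`,
generated by the elements `Y_i − 1` and `Y_i^{-1} − 1`. -/
def unipIdeal (K : Type) [Field K] (N : ℕ) (q : Kˣ) :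
    Submodule (SmashD K N q) (SmashD K N q) :=
  Submodule.span (SmashD K N q)
    ((Set.range fun i : Fin N => Ye K q i - 1) ∪
      (Set.range fun i : Fin N => YeInv K q i - 1))

/-!
The induced module is isomorphic to the `K`-vector space `M` with basis `e (a, w)` (`a ∈ ℤ^N`,
`w ∈ S_N`) on which `X_i` adds the `i`-th unit vector to `a`, `Y_i` multiplies by `q ^ a i` and
`s_v` sends `e (a, w)` to `e (v • a, v * w)`; the class of `X^a s_w` corresponds to `e (a, w)`.
Right translations `e (a, v) ↦ e (a, v * w)` commute with this action and give an algebra map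
`K[S_N] → (End_D M)ᵐᵒᵖ`. An endomorphism is determined by its value at the generator `e (0, 1)`,
and this value is fixed by every `Y_i`; since `q` is not a root of unity, such vectors are exactly
the combinations of the `e (0, w)`, which makes the map bijective.
-/

-- `(w • a) (w i) = a i`: permutations act on exponent vectors by moving coordinates.
attribute [local instance] Finsupp.comapSMul Finsupp.comapMulAction
  Finsupp.comapDistribMulAction

namespace Finsupp

variable {ι R : Type*} [CommSemiring R]

def weightedMapDomain (F : ι → R) (t : ι → ι) : (ι →₀ R) →ₗ[R] ι →₀ R :=
  lsum R fun p => F p • lsingle (t p)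

@[simp]
theorem weightedMapDomain_single (F : ι → R) (t : ι → ι) (p : ι) (c : R) :
    weightedMapDomain F t (single p c) = single (t p) (F p * c) := by
  simp [weightedMapDomain, smul_single]

theorem weightedMapDomain_mul (F G : ι → R) (t s : ι → ι) :
    weightedMapDomain F t * weightedMapDomain G s =
      weightedMapDomain (fun p => F (s p) * G p) (t ∘ s) := by
  ext p : 2
  simp

theorem weightedMapDomain_one_id : weightedMapDomain (1 : ι → R) id = 1 := by
  ext p : 2
  simp

theorem smul_weightedMapDomain (c : R) (F : ι → R) (t : ι → ι) :
    c • weightedMapDomain F t = weightedMapDomain (fun p => c * F p) t := by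
  ext p : 2
  simp

theorem weightedMapDomain_id_apply (F : ι → R) (m : ι →₀ R) (p : ι) :
    weightedMapDomain F id m p = F p * m p := by
  induction m using induction_linear with
  | zero => simp
  | add m₁ m₂ h₁ h₂ => simp [h₁, h₂, mul_add]
  | single p' c => by_cases h : p' = p <;> simp [h]

theorem mapDomain_prodMk_mapDomain_snd {α β M : Type*} [AddCommMonoid M] {a : α}
    {m : α × β →₀ M} (h : ∀ p ∈ m.support, p.1 = a) :
    mapDomain (Prod.mk a) (mapDomain Prod.snd m) = m := by
  rw [← mapDomain_comp]
  conv_rhs => rw [← mapDomain_id (v := m)]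
  exact mapDomain_congr fun p hp => Prod.ext (h p hp).symm rfl

end Finsupp

theorem map_inv_smul_of_map_smul {G α β : Type*} [Group G] [MulAction G α] [MulAction G β]
    (f : α → β) {g : G} (h : ∀ x, f (g • x) = g • f x) (x : α) :
    f (g⁻¹ • x) = g⁻¹ • f x := by
  rw [← inv_smul_smul g (f (g⁻¹ • x)), ← h, smul_inv_smul]

namespace SmashD

open Finsupp

variable (K : Type) [Field K] {N : ℕ} (q : Kˣ)

def gen (g : SGen N) : SmashD K N q := RingQuot.mkAlgHom K (SRel K N q) (sg K g)

variable {K q} in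
theorem gen_mul_gen {g₁ g₂ : SGen N} {b : FreeAlgebra K (SGen N)}
    (h : SRel K N q (sg K g₁ * sg K g₂) b) :
    gen K q g₁ * gen K q g₂ = RingQuot.mkAlgHom K (SRel K N q) b := by
  rw [gen, gen, ← map_mul]
  exact RingQuot.mkAlgHom_rel K h

def X (i : Fin N) : (SmashD K N q)ˣ where
  val := gen K q (.X i)
  inv := gen K q (.Xinv i)
  val_inv := by rw [gen_mul_gen (.XXinv i), map_one]
  inv_val := by rw [gen_mul_gen (.XinvX i), map_one]

def Y (i : Fin N) : (SmashD K N q)ˣ where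
  val := gen K q (.Y i)
  inv := gen K q (.Yinv i)
  val_inv := by rw [gen_mul_gen (.YYinv i), map_one]
  inv_val := by rw [gen_mul_gen (.YinvY i), map_one]

def s : Equiv.Perm (Fin N) →* (SmashD K N q)ˣ :=
  MonoidHom.toHomUnits
    { toFun := fun w => gen K q (.S w)
      map_one' := (RingQuot.mkAlgHom_rel K SRel.Sone).trans (map_one _)
      map_mul' := fun w w' => (gen_mul_gen (.Smul w w')).symm }

def algebraMapUnits : Kˣ →* (SmashD K N q)ˣ := Units.map (algebraMap K (SmashD K N q))

theorem coe_X (i : Fin N) : (X K q i : SmashD K N q) = gen K q (.X i) := rfl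

theorem coe_X_inv (i : Fin N) : (↑(X K q i)⁻¹ : SmashD K N q) = gen K q (.Xinv i) := rfl

theorem coe_Y (i : Fin N) : (Y K q i : SmashD K N q) = gen K q (.Y i) := rfl

theorem coe_s (w : Equiv.Perm (Fin N)) : (s K q w : SmashD K N q) = gen K q (.S w) := rfl

theorem coe_algebraMapUnits (c : Kˣ) :
    ((algebraMapUnits K q c : (SmashD K N q)ˣ) : SmashD K N q) = algebraMap K _ (c : K) := rfl

theorem commute_algebraMapUnits (c : Kˣ) (u : (SmashD K N q)ˣ) :
    Commute (algebraMapUnits K q c) u :=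
  Units.ext (Algebra.commutes (c : K) (u : SmashD K N q))

theorem commute_X_X (i j : Fin N) : Commute (X K q i) (X K q j) :=
  Units.ext <| (gen_mul_gen (.XX i j)).trans (map_mul _ _ _)

theorem commute_Y_X_of_ne {i j : Fin N} (h : i ≠ j) : Commute (Y K q i) (X K q j) :=
  Units.ext <| (gen_mul_gen (.YXne i j h)).trans (map_mul _ _ _)

theorem semiconjBy_Y_X (i : Fin N) :
    SemiconjBy (Y K q i) (X K q i) (algebraMapUnits K q q * X K q i) := by
  ext
  simp only [Units.val_mul, coe_Y, coe_X, coe_algebraMapUnits]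
  rw [gen_mul_gen (.YXeq i), map_smul, Algebra.smul_def, map_mul, mul_assoc]
  rfl

theorem semiconjBy_s_X (w : Equiv.Perm (Fin N)) (i : Fin N) :
    SemiconjBy (s K q w) (X K q i) (X K q (w i)) :=
  Units.ext <| (gen_mul_gen (.SX w i)).trans (map_mul _ _ _)

theorem semiconjBy_s_Y (w : Equiv.Perm (Fin N)) (i : Fin N) :
    SemiconjBy (s K q w) (Y K q i) (Y K q (w i)) :=
  Units.ext <| (gen_mul_gen (.SY w i)).trans (map_mul _ _ _)

theorem pairwise_commute_zpowersHom_X :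
    Pairwise fun i j : Fin N => ∀ m n : Multiplicative ℤ,
      Commute (zpowersHom _ (X K q i) m) (zpowersHom _ (X K q j) n) :=
  fun i j _ m n => (commute_X_X K q i j).zpow_zpow m.toAdd n.toAdd

def xPow (a : Fin N →₀ ℤ) : (SmashD K N q)ˣ :=
  MonoidHom.noncommPiCoprod (fun i => zpowersHom _ (X K q i))
    (pairwise_commute_zpowersHom_X K q) fun i => .ofAdd (a i)

theorem xPow_zero : xPow K q (0 : Fin N →₀ ℤ) = 1 :=
  map_one _

theorem xPow_add (a b : Fin N →₀ ℤ) : xPow K q (a + b) = xPow K q a * xPow K q b := by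
  rw [xPow, xPow, xPow, ← map_mul]
  rfl

theorem xPow_single (i : Fin N) (n : ℤ) : xPow K q (single i n) = X K q i ^ n := by
  have : (fun j => Multiplicative.ofAdd (single i n j)) = Pi.mulSingle i (.ofAdd n) := by
    ext j
    rcases eq_or_ne j i with rfl | h <;> simp [*]
  rw [xPow, this, MonoidHom.noncommPiCoprod_mulSingle, zpowersHom_apply, toAdd_ofAdd]

theorem semiconjBy_Y_X_zpow (i j : Fin N) (n : ℤ) :
    SemiconjBy (Y K q i) (X K q j ^ n)
      (algebraMapUnits K q (q ^ single j n i) * X K q j ^ n) := by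
  rcases eq_or_ne j i with rfl | h
  · rw [single_eq_same, map_zpow, ← (commute_algebraMapUnits K q q _).mul_zpow]
    exact (semiconjBy_Y_X K q j).zpow_right n
  · rw [single_eq_of_ne' h, zpow_zero, map_one, one_mul]
    exact (commute_Y_X_of_ne K q h.symm).zpow_right n

theorem semiconjBy_Y_xPow (i : Fin N) (a : Fin N →₀ ℤ) :
    SemiconjBy (Y K q i) (xPow K q a) (algebraMapUnits K q (q ^ a i) * xPow K q a) := by
  induction a using Finsupp.induction with
  | zero => simp [xPow_zero]
  | single_add j n f _ _ ih =>
    rw [xPow_add, xPow_single, Finsupp.add_apply, zpow_add, map_mul,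
      ← (commute_algebraMapUnits K q _ _).symm.mul_mul_mul_comm]
    exact (semiconjBy_Y_X_zpow K q i j n).mul_right ih

theorem semiconjBy_s_xPow (w : Equiv.Perm (Fin N)) (a : Fin N →₀ ℤ) :
    SemiconjBy (s K q w) (xPow K q a) (xPow K q (w • a)) := by
  induction a using Finsupp.induction with
  | zero => simp [xPow_zero]
  | single_add j n f _ _ ih =>
    rw [smul_add, comapSMul_single, Equiv.Perm.smul_def, xPow_add, xPow_add, xPow_single,
      xPow_single]
    exact ((semiconjBy_s_X K q w j).zpow_right n).mul_right ih

def xPowPerm (p : (Fin N →₀ ℤ) × Equiv.Perm (Fin N)) : (SmashD K N q)ˣ :=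
  xPow K q p.1 * s K q p.2

theorem Y_mul_xPowPerm (i : Fin N) (a : Fin N →₀ ℤ) (w : Equiv.Perm (Fin N)) :
    Y K q i * xPowPerm K q (a, w) =
      algebraMapUnits K q (q ^ a i) * xPowPerm K q (a, w) * Y K q (w⁻¹ i) := by
  have hYs : Y K q i * s K q w = s K q w * Y K q (w⁻¹ i) := by
    simpa using (semiconjBy_s_Y K q w (w⁻¹ i)).eq.symm
  rw [xPowPerm, ← mul_assoc, (semiconjBy_Y_xPow K q i a).eq, mul_assoc, hYs]
  simp only [mul_assoc]

theorem s_mul_xPowPerm (v : Equiv.Perm (Fin N)) (a : Fin N →₀ ℤ) (w : Equiv.Perm (Fin N)) :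
    s K q v * xPowPerm K q (a, w) = xPowPerm K q (v • a, v * w) := by
  rw [xPowPerm, xPowPerm, ← mul_assoc, (semiconjBy_s_xPow K q v a).eq, mul_assoc, map_mul]

abbrev StdModule (K : Type) [Field K] (N : ℕ) := (Fin N →₀ ℤ) × Equiv.Perm (Fin N) →₀ K

def stdVec (K : Type) [Field K] (N : ℕ) : StdModule K N := single (0, 1) 1

def stdGen : SGen N → Module.End K (StdModule K N)
  | .X i => weightedMapDomain 1 fun p => (single i 1 + p.1, p.2)
  | .Xinv i => weightedMapDomain 1 fun p => (single i (-1) + p.1, p.2)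
  | .Y i => weightedMapDomain (fun p => ↑(q ^ p.1 i)) id
  | .Yinv i => weightedMapDomain (fun p => ↑(q ^ (-p.1 i))) id
  | .S w => weightedMapDomain 1 fun p => (w • p.1, w * p.2)

theorem stdGen_rel ⦃x y : FreeAlgebra K (SGen N)⦄ (h : SRel K N q x y) :
    FreeAlgebra.lift K (stdGen K q) x = FreeAlgebra.lift K (stdGen K q) y := by
  induction h <;>
    simp only [sg, map_mul, map_one, map_smul, FreeAlgebra.lift_ι_apply, stdGen,
      weightedMapDomain_mul, smul_weightedMapDomain, ← weightedMapDomain_one_id] <;>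
    congr 1 <;> funext ⟨a, w⟩
  all_goals simp_all [add_comm, add_left_comm, add_assoc, zpow_add₀,
    mul_inv_cancel₀ (zpow_ne_zero _ q.ne_zero), single_eq_of_ne, mul_comm, mul_smul, mul_assoc,
    comapSMul_single, comapSMul_apply]

def stdRep : SmashD K N q →ₐ[K] Module.End K (StdModule K N) :=
  RingQuot.liftAlgHom K ⟨FreeAlgebra.lift K (stdGen K q), stdGen_rel K q⟩

theorem stdRep_gen (g : SGen N) : stdRep K q (gen K q g) = stdGen K q g := by
  rw [stdRep, gen, RingQuot.liftAlgHom_mkAlgHom_apply, sg, FreeAlgebra.lift_ι_apply]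

instance : Module (SmashD K N q) (StdModule K N) :=
  Module.compHom _ (stdRep K q).toRingHom

theorem smul_def (d : SmashD K N q) (m : StdModule K N) : d • m = stdRep K q d m := rfl

instance : IsScalarTower K (SmashD K N q) (StdModule K N) :=
  ⟨fun c d m => by rw [smul_def, smul_def, map_smul, LinearMap.smul_apply]⟩

instance : SMulCommClass (SmashD K N q) K (StdModule K N) :=
  ⟨fun d c m => by rw [smul_def, smul_def, map_smul]⟩

section

variable {K q}

theorem map_smul_of_map_gen_smul {M₁ M₂ : Type*} [AddCommGroup M₁] [Module K M₁]
    [Module (SmashD K N q) M₁] [IsScalarTower K (SmashD K N q) M₁] [AddCommGroup M₂]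
    [Module K M₂] [Module (SmashD K N q) M₂] [IsScalarTower K (SmashD K N q) M₂]
    (f : M₁ →ₗ[K] M₂) (h : ∀ (g : SGen N) m, f (gen K q g • m) = gen K q g • f m)
    (d : SmashD K N q) (m : M₁) : f (d • m) = d • f m := by
  obtain ⟨x, rfl⟩ := RingQuot.mkAlgHom_surjective K (SRel K N q) d
  induction x using FreeAlgebra.induction generalizing m with
  | grade0 c => rw [AlgHom.commutes, algebraMap_smul, map_smul, algebraMap_smul]
  | grade1 g => exact h g m
  | mul x y hx hy => rw [map_mul, mul_smul, hx, hy, mul_smul]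
  | add x y hx hy => rw [map_add, add_smul, map_add, hx, hy, add_smul]

@[simp]
theorem X_smul_single (i : Fin N) (a : Fin N →₀ ℤ) (w : Equiv.Perm (Fin N)) (c : K) :
    (X K q i : SmashD K N q) • single (a, w) c = single (single i 1 + a, w) c := by
  simp [smul_def, coe_X, stdRep_gen, stdGen]

@[simp]
theorem X_inv_smul_single (i : Fin N) (a : Fin N →₀ ℤ) (w : Equiv.Perm (Fin N)) (c : K) :
    (↑(X K q i)⁻¹ : SmashD K N q) • single (a, w) c = single (single i (-1) + a, w) c := by
  simp [smul_def, coe_X_inv, stdRep_gen, stdGen]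

@[simp]
theorem Y_smul_single (i : Fin N) (a : Fin N →₀ ℤ) (w : Equiv.Perm (Fin N)) (c : K) :
    (Y K q i : SmashD K N q) • single (a, w) c = single (a, w) (q ^ a i * c) := by
  simp [smul_def, coe_Y, stdRep_gen, stdGen]

@[simp]
theorem s_smul_single (v : Equiv.Perm (Fin N)) (a : Fin N →₀ ℤ) (w : Equiv.Perm (Fin N))
    (c : K) :
    (s K q v : SmashD K N q) • single (a, w) c = single (v • a, v * w) c := by
  simp [smul_def, coe_s, stdRep_gen, stdGen]

theorem X_zpow_smul_single (i : Fin N) (n : ℤ) (b : Fin N →₀ ℤ) (w : Equiv.Perm (Fin N))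
    (c : K) :
    ((X K q i ^ n : (SmashD K N q)ˣ) : SmashD K N q) • single (b, w) c =
      single (single i n + b, w) c := by
  induction n using Int.induction_on generalizing b with
  | zero => simp
  | succ n ih =>
    rw [zpow_add_one, Units.val_mul, mul_smul, X_smul_single, ih, ← add_assoc, ← single_add]
  | pred n ih =>
    rw [zpow_sub_one, Units.val_mul, mul_smul, X_inv_smul_single, ih, ← add_assoc,
      ← single_add, sub_eq_add_neg]

theorem xPowPerm_smul_stdVec (p : (Fin N →₀ ℤ) × Equiv.Perm (Fin N)) :
    (xPowPerm K q p : SmashD K N q) • stdVec K N = single p 1 := by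
  obtain ⟨a, w⟩ := p
  suffices ∀ b, (xPow K q a : SmashD K N q) • single (b, w) (1 : K) = single (a + b, w) 1 by
    simpa [xPowPerm, stdVec, mul_smul] using this 0
  induction a using Finsupp.induction with
  | zero => simp [xPow_zero]
  | single_add i n f _ _ ih =>
    intro b
    rw [xPow_add, xPow_single, Units.val_mul, mul_smul, ih, X_zpow_smul_single, add_assoc]

theorem Y_smul_stdVec (i : Fin N) : (Y K q i : SmashD K N q) • stdVec K N = stdVec K N := by
  simp [stdVec]

end

theorem unipIdeal_le_ker_toSpanSingleton :
    unipIdeal K N q ≤ LinearMap.ker (LinearMap.toSpanSingleton _ _ (stdVec K N)) := by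
  rw [unipIdeal, Submodule.span_le]
  rintro _ (⟨i, rfl⟩ | ⟨i, rfl⟩) <;>
    simp only [SetLike.mem_coe, LinearMap.mem_ker, LinearMap.toSpanSingleton_apply, sub_smul,
      one_smul, sub_eq_zero]
  · exact Y_smul_stdVec i
  · change ((Y K q i)⁻¹ : (SmashD K N q)ˣ) • stdVec K N = stdVec K N
    rw [inv_smul_eq_iff, Units.smul_def, Y_smul_stdVec]

def toStd : (SmashD K N q ⧸ unipIdeal K N q) →ₗ[SmashD K N q] StdModule K N :=
  (unipIdeal K N q).liftQ _ (unipIdeal_le_ker_toSpanSingleton K q)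

theorem toStd_mk (d : SmashD K N q) :
    toStd K q (Submodule.Quotient.mk d) = d • stdVec K N := rfl

theorem mk_mul_Y (e : SmashD K N q) (j : Fin N) :
    (Submodule.Quotient.mk (e * (Y K q j : SmashD K N q)) : SmashD K N q ⧸ unipIdeal K N q) =
      Submodule.Quotient.mk e := by
  rw [Submodule.Quotient.eq, ← mul_sub_one]
  exact (unipIdeal K N q).smul_mem e (Submodule.subset_span (Or.inl ⟨j, rfl⟩))

theorem Y_smul_mk_xPowPerm (i : Fin N) (a : Fin N →₀ ℤ) (w : Equiv.Perm (Fin N)) :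
    (Y K q i : SmashD K N q) • (Submodule.Quotient.mk (xPowPerm K q (a, w) : SmashD K N q) :
        SmashD K N q ⧸ unipIdeal K N q) =
      (q : K) ^ a i • Submodule.Quotient.mk (xPowPerm K q (a, w) : SmashD K N q) := by
  rw [← Submodule.Quotient.mk_smul, smul_eq_mul, ← Units.val_mul, Y_mul_xPowPerm, Units.val_mul,
    mk_mul_Y, Units.val_mul, coe_algebraMapUnits, Units.val_zpow_eq_zpow_val, ← Algebra.smul_def,
    Submodule.Quotient.mk_smul]

def ofStdₗ : StdModule K N →ₗ[K] SmashD K N q ⧸ unipIdeal K N q :=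
  linearCombination K fun p => Submodule.Quotient.mk (xPowPerm K q p : SmashD K N q)

theorem ofStdₗ_single (p : (Fin N →₀ ℤ) × Equiv.Perm (Fin N)) (c : K) :
    ofStdₗ K q (single p c) = c • Submodule.Quotient.mk (xPowPerm K q p : SmashD K N q) :=
  linearCombination_single K c p

theorem ofStdₗ_single_one (p : (Fin N →₀ ℤ) × Equiv.Perm (Fin N)) :
    ofStdₗ K q (single p 1) = Submodule.Quotient.mk (xPowPerm K q p : SmashD K N q) := by
  rw [ofStdₗ_single]
  exact one_smul K (α := SmashD K N q ⧸ unipIdeal K N q) _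

variable {K q} in
theorem ofStdₗ_units_smul {u : (SmashD K N q)ˣ}
    (h : ∀ p : (Fin N →₀ ℤ) × Equiv.Perm (Fin N),
      ofStdₗ K q ((u : SmashD K N q) • single p (1 : K)) =
        (u : SmashD K N q) • ofStdₗ K q (single p (1 : K)))
    (m : StdModule K N) : ofStdₗ K q (u • m) = u • ofStdₗ K q m := by
  induction m using Finsupp.induction_linear with
  | zero => simp
  | add m₁ m₂ h₁ h₂ => rw [smul_add, map_add, h₁, h₂, map_add, smul_add]
  | single p c =>
    rw [← smul_single_one, Units.smul_def, Units.smul_def, smul_comm (u : SmashD K N q) c,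
      map_smul (ofStdₗ K q) c, map_smul (ofStdₗ K q) c, h, smul_comm (u : SmashD K N q) c]

theorem ofStdₗ_gen_smul (g : SGen N) (m : StdModule K N) :
    ofStdₗ K q (gen K q g • m) = gen K q g • ofStdₗ K q m := by
  have hX (i : Fin N) := ofStdₗ_units_smul (u := X K q i) fun ⟨a, w⟩ => by
    rw [X_smul_single, ofStdₗ_single_one, ofStdₗ_single_one, ← Submodule.Quotient.mk_smul,
      smul_eq_mul, ← Units.val_mul, xPowPerm, xPowPerm, xPow_add, xPow_single, zpow_one,
      mul_assoc]
  have hY (i : Fin N) := ofStdₗ_units_smul (u := Y K q i) fun ⟨a, w⟩ => by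
    rw [Y_smul_single, mul_one, ofStdₗ_single, ofStdₗ_single_one, Y_smul_mk_xPowPerm]
  have hs (v : Equiv.Perm (Fin N)) := ofStdₗ_units_smul (u := s K q v) fun ⟨a, w⟩ => by
    rw [s_smul_single, ofStdₗ_single_one, ofStdₗ_single_one, ← Submodule.Quotient.mk_smul,
      smul_eq_mul, ← Units.val_mul, s_mul_xPowPerm]
  cases g with
  | X i => exact hX i m
  | Xinv i => exact map_inv_smul_of_map_smul _ (hX i) m
  | Y i => exact hY i m
  | Yinv i => exact map_inv_smul_of_map_smul _ (hY i) m
  | S v => exact hs v m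

def ofStd : StdModule K N →ₗ[SmashD K N q] SmashD K N q ⧸ unipIdeal K N q where
  __ := ofStdₗ K q
  map_smul' := map_smul_of_map_gen_smul (ofStdₗ K q) (ofStdₗ_gen_smul K q)

theorem toStd_ofStd (m : StdModule K N) : toStd K q (ofStd K q m) = m := by
  induction m using Finsupp.induction_linear with
  | zero => simp
  | add m₁ m₂ h₁ h₂ => rw [map_add, map_add, h₁, h₂]
  | single p c =>
    change toStd K q (ofStdₗ K q _) = _
    rw [ofStdₗ_single, ← Submodule.Quotient.mk_smul, toStd_mk, smul_assoc, xPowPerm_smul_stdVec,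
      smul_single_one]

theorem ofStd_stdVec : ofStd K q (stdVec K N) = Submodule.Quotient.mk 1 := by
  change ofStdₗ K q _ = _
  rw [stdVec, ofStdₗ_single_one, xPowPerm, xPow_zero, map_one, mul_one, Units.val_one]

theorem ofStd_toStd (y : SmashD K N q ⧸ unipIdeal K N q) : ofStd K q (toStd K q y) = y := by
  obtain ⟨d, rfl⟩ := Submodule.Quotient.mk_surjective _ y
  rw [toStd_mk, map_smul, ofStd_stdVec, ← Submodule.Quotient.mk_smul, smul_eq_mul, mul_one]

def quotEquivStd : (SmashD K N q ⧸ unipIdeal K N q) ≃ₗ[SmashD K N q] StdModule K N :=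
  .ofLinearMap (toStd K q) (ofStd K q) (LinearMap.ext (toStd_ofStd K q))
    (LinearMap.ext (ofStd_toStd K q))

theorem exists_smul_stdVec_eq (m : StdModule K N) : ∃ d : SmashD K N q, d • stdVec K N = m := by
  obtain ⟨d, hd⟩ := Submodule.Quotient.mk_surjective _ (ofStd K q m)
  exact ⟨d, by rw [← toStd_mk, hd, toStd_ofStd]⟩

def rightTranslateₗ (w : Equiv.Perm (Fin N)) : Module.End K (StdModule K N) :=
  weightedMapDomain 1 fun p => (p.1, p.2 * w)

theorem rightTranslateₗ_one : rightTranslateₗ K (1 : Equiv.Perm (Fin N)) = 1 := by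
  simp only [rightTranslateₗ, mul_one, Prod.mk.eta]
  exact weightedMapDomain_one_id

theorem rightTranslateₗ_mul (w w' : Equiv.Perm (Fin N)) :
    rightTranslateₗ K (w * w') = rightTranslateₗ K w' * rightTranslateₗ K w := by
  simp [rightTranslateₗ, weightedMapDomain_mul, Function.comp_def, mul_assoc, Pi.one_def]

theorem rightTranslateₗ_gen_smul (w : Equiv.Perm (Fin N)) (g : SGen N) (m : StdModule K N) :
    rightTranslateₗ K w (gen K q g • m) = gen K q g • rightTranslateₗ K w m := by
  rw [smul_def, smul_def, stdRep_gen, ← Module.End.mul_apply, ← Module.End.mul_apply]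
  congr 1
  cases g <;> simp [rightTranslateₗ, stdGen, weightedMapDomain_mul, Function.comp_def, mul_assoc]

def rightTranslate (w : Equiv.Perm (Fin N)) : Module.End (SmashD K N q) (StdModule K N) where
  __ := rightTranslateₗ K w
  map_smul' := map_smul_of_map_gen_smul _ (rightTranslateₗ_gen_smul K q w)

def rightTranslateHom :
    Equiv.Perm (Fin N) →* (Module.End (SmashD K N q) (StdModule K N))ᵐᵒᵖ where
  toFun w := .op (rightTranslate K q w)
  map_one' := congrArg MulOpposite.op <|
    LinearMap.restrictScalars_injective K (rightTranslateₗ_one K)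
  map_mul' w w' := congrArg MulOpposite.op <|
    LinearMap.restrictScalars_injective K (rightTranslateₗ_mul K w w')

def rightTranslateAlgHom : MonoidAlgebra K (Equiv.Perm (Fin N)) →ₐ[K]
    (Module.End (SmashD K N q) (StdModule K N))ᵐᵒᵖ :=
  MonoidAlgebra.lift K _ _ (rightTranslateHom K q)

theorem rightTranslateAlgHom_apply_stdVec (g : MonoidAlgebra K (Equiv.Perm (Fin N))) :
    (rightTranslateAlgHom K q g).unop (stdVec K N) = mapDomain (fun w => (0, w)) g.coeff := by
  induction g using MonoidAlgebra.induction_linear with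
  | zero => simp
  | add g₁ g₂ h₁ h₂ =>
    rw [map_add, MulOpposite.unop_add, LinearMap.add_apply, h₁, h₂, MonoidAlgebra.coeff_add,
      mapDomain_add]
  | single w c =>
    simp [rightTranslateAlgHom, MonoidAlgebra.lift_single, rightTranslateHom, rightTranslate,
      rightTranslateₗ, stdVec]

theorem rightTranslateAlgHom_injective :
    Function.Injective (rightTranslateAlgHom K q (N := N)) := by
  refine Function.Injective.of_comp
    (f := fun φ : (Module.End (SmashD K N q) (StdModule K N))ᵐᵒᵖ => φ.unop (stdVec K N)) ?_
  rw [show _ ∘ _ = _ from funext (rightTranslateAlgHom_apply_stdVec K q)]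
  exact (mapDomain_injective fun w w' h => congrArg Prod.snd h).comp
    MonoidAlgebra.coeff_injective

theorem Y_smul_apply (i : Fin N) (m : StdModule K N)
    (p : (Fin N →₀ ℤ) × Equiv.Perm (Fin N)) :
    ((Y K q i : SmashD K N q) • m) p = (q : K) ^ p.1 i * m p := by
  rw [smul_def, coe_Y, stdRep_gen, stdGen, weightedMapDomain_id_apply, Units.val_zpow_eq_zpow_val]

variable {K q} in
theorem fst_eq_zero_of_forall_Y_smul_eq (hq : ¬IsOfFinOrder q) {m : StdModule K N}
    (hm : ∀ i : Fin N, (Y K q i : SmashD K N q) • m = m)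
    {p : (Fin N →₀ ℤ) × Equiv.Perm (Fin N)} (hp : p ∈ m.support) : p.1 = 0 := by
  ext i
  have hpow : (q : K) ^ p.1 i = 1 := by
    have := Y_smul_apply K q i m p
    rw [hm i] at this
    exact (mul_eq_right₀ (mem_support_iff.mp hp)).mp this.symm
  exact injective_zpow_iff_not_isOfFinOrder.mpr hq
    (Units.ext (by simpa using hpow) : q ^ p.1 i = q ^ (0 : ℤ))

theorem rightTranslateAlgHom_surjective (hq : ¬IsOfFinOrder q) :
    Function.Surjective (rightTranslateAlgHom K q (N := N)) := by
  intro φ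
  set m := φ.unop (stdVec K N)
  have hm (i : Fin N) : (Y K q i : SmashD K N q) • m = m := by
    rw [← map_smul, Y_smul_stdVec]
  refine ⟨MonoidAlgebra.ofCoeff (mapDomain Prod.snd m), MulOpposite.unop_injective ?_⟩
  ext x
  obtain ⟨d, rfl⟩ := exists_smul_stdVec_eq K q x
  rw [map_smul, map_smul, rightTranslateAlgHom_apply_stdVec, MonoidAlgebra.coeff_ofCoeff,
    mapDomain_prodMk_mapDomain_snd fun p hp => fst_eq_zero_of_forall_Y_smul_eq hq hm hp]

end SmashD

theorem statement11_general (K : Type) [Field K] (N : ℕ)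
    (q : Kˣ) (hq : ∀ m : ℕ, m ≠ 0 → (q : K) ^ m ≠ 1) :
    Nonempty
      (Module.End (SmashD K N q) (SmashD K N q ⧸ unipIdeal K N q) ≃ₐ[K]
        (MonoidAlgebra K (Equiv.Perm (Fin N)))ᵐᵒᵖ) := by
  have hq' : ¬IsOfFinOrder q := by
    rw [isOfFinOrder_iff_pow_eq_one]
    rintro ⟨n, hn, hqn⟩
    exact hq n hn.ne' (by simpa using congrArg Units.val hqn)
  let e : MonoidAlgebra K (Equiv.Perm (Fin N)) ≃ₐ[K]
      (Module.End (SmashD K N q) (SmashD.StdModule K N))ᵐᵒᵖ :=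
    .ofBijective _ ⟨SmashD.rightTranslateAlgHom_injective K q,
      SmashD.rightTranslateAlgHom_surjective K q hq'⟩
  exact ⟨((SmashD.quotEquivStd K q).conjAlgEquiv K).trans (AlgEquiv.opComm e).symm⟩

theorem statement11 (K : Type) [Field K] [CharZero K] (N : ℕ) (hN : 1 ≤ N)
    (q : Kˣ) (hq : ∀ m : ℕ, m ≠ 0 → (q : K) ^ m ≠ 1) :
    Nonempty
      (Module.End (SmashD K N q) (SmashD K N q ⧸ unipIdeal K N q) ≃ₐ[K]
        (MonoidAlgebra K (Equiv.Perm (Fin N)))ᵐᵒᵖ) :=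
  statement11_general K N q hq
end
end

section
/- Let b = (b₁,…,b_N) ∈ (K^×)^N satisfy: whenever b_i ≠ b_j, the ratio b_i/b_j is not an integer power of q. Let W_J = {w ∈ S_N : b_{w(i)} = b_i for all i} be the stabilizer of b in S_N, and let K_b denote the one-dimensional K[Y^{±}]-module on which Y_i acts by b_i. Then the endomorphism algebra End_D(D ⊗_{K[Y^{±}]} K_b) is isomorphic as a K-algebra to K[W_J]^op. -/
/-!
Statement 13: Let `K` be a field of characteristic zero, `q ∈ K^×` not a root
of unity, and `D = D_q(H) # S_N` the smash product of the quantum torus with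
the symmetric group.  Let `b ∈ (K^×)^N` be such that whenever `b_i ≠ b_j`, the
ratio `b_i/b_j` is not an integer power of `q`.  Let `W_J ⊆ S_N` be the
stabilizer of `b` and `K_b` the one-dimensional `K[Y^{±}]`-module on which
`Y_i` acts by `b_i`.  Then `End_D(D ⊗_{K[Y^{±}]} K_b)` is isomorphic as a
`K`-algebra to `K[W_J]^op`.

The induced module `D ⊗_{K[Y^{±}]} K_b` is realized as the quotient of `D` by
the left ideal generated by the elements `Y_i − b_i` and `Y_i^{-1} − b_i^{-1}`.
-/

noncomputable section

/-- The stabilizer `W_J = {w ∈ S_N : b_{w(i)} = b_i for all i}` of `b` in `S_N`. -/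
def permStab (K : Type) [Field K] (N : ℕ) (b : Fin N → Kˣ) :
    Subgroup (Equiv.Perm (Fin N)) where
  carrier := {w | ∀ i, b (w i) = b i}
  one_mem' := fun i => rfl
  mul_mem' := by
    intro w w' hw hw' i
    rw [Equiv.Perm.mul_apply, hw, hw']
  inv_mem' := by
    intro w hw i
    have := hw (w⁻¹ i)
    rw [show w (w⁻¹ i) = i from by simp] at this
    exact this.symm

/-- The left ideal of `D` presenting the induced module `D ⊗_{K[Y^{±}]} K_b`,
generated by the elements `Y_i − b_i` and `Y_i^{-1} − b_i^{-1}`. -/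
def charIdeal (K : Type) [Field K] (N : ℕ) (q : Kˣ) (b : Fin N → Kˣ) :
    Submodule (SmashD K N q) (SmashD K N q) :=
  Submodule.span (SmashD K N q)
    ((Set.range fun i : Fin N => Ye K q i - algebraMap K (SmashD K N q) (b i : K)) ∪
      (Set.range fun i : Fin N => YeInv K q i - algebraMap K (SmashD K N q) ((b i)⁻¹ : Kˣ)))

/-!
The induced module `M = D ⊗_{K[Y^{±}]} K_b` has the `K`-basis `X^a s_w ⊗ 1` (`a ∈ ℤ^N`,
`w ∈ S_N`), on which `Y_i` acts diagonally by `q^{a_i} b_{w⁻¹(i)}`. We realise this basis by an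
explicit action of `D` on the free `K`-module over `ℤ^N × S_N`: the orbit map `d ↦ d • (1 ⊗ 1)`
kills the defining left ideal `I`, and every `d` is congruent modulo `I` to the combination of
monomials `X^a s_w` read off from its image, so `I` is exactly the kernel of the orbit map.

Since `M = D / I` is cyclic, every endomorphism is right multiplication by some `s` in the
idealizer `{s | I s ⊆ I}`, and it vanishes iff `s ∈ I`. Such an `s` satisfies `(Y_i - b_i) s ∈ I`,
so its image in `M` is a vector of weight `b`. As `q` is not a root of unity and distinct `b_i`
are not `q`-power multiples of each other, the weight `b` only occurs on the vectors `s_w ⊗ 1`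
with `w ∈ W_J`. Hence `w ↦ (right multiplication by s_w)` induces `K[W_J] ≅ End_D(M)ᵐᵒᵖ`.
-/

section SkewCommute

variable {K A : Type*} [Field K] [Ring A] [Algebra K A] {x : A} {u : Aˣ} {c : Kˣ}

theorem mul_units_inv_eq_smul (h : x * u = (c : K) • (↑u * x)) :
    x * ↑u⁻¹ = ((c⁻¹ : Kˣ) : K) • (↑u⁻¹ * x) := by
  calc x * ↑u⁻¹ = ((c⁻¹ : Kˣ) : K) • (↑u⁻¹ * ((c : K) • (↑u * x)) * ↑u⁻¹) := by
        rw [mul_smul_comm, smul_mul_assoc, smul_smul, ← Units.val_mul, inv_mul_cancel,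
          Units.val_one, one_smul, ← mul_assoc, Units.inv_mul, one_mul]
    _ = ((c⁻¹ : Kˣ) : K) • (↑u⁻¹ * x) := by
        rw [← h, ← mul_assoc, Units.mul_inv_cancel_right]

theorem mul_units_zpow_eq_smul (h : x * u = (c : K) • (↑u * x)) (n : ℤ) :
    x * ↑(u ^ n) = ((c ^ n : Kˣ) : K) • (↑(u ^ n) * x) := by
  induction n using Int.induction_on with
  | zero => simp
  | succ n ih =>
    rw [zpow_add_one, zpow_add_one, Units.val_mul, ← mul_assoc, ih, smul_mul_assoc, mul_assoc, h,
      mul_smul_comm, smul_smul, ← mul_assoc, Units.val_mul]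
  | pred n ih =>
    rw [zpow_sub_one, zpow_sub_one, Units.val_mul, ← mul_assoc, ih, smul_mul_assoc, mul_assoc,
      mul_units_inv_eq_smul h, mul_smul_comm, smul_smul, ← mul_assoc, Units.val_mul]

end SkewCommute

theorem eq_zero_of_units_zpow_eq_one {M : Type*} [Monoid M] {u : Mˣ}
    (hu : ∀ m : ℕ, m ≠ 0 → (u : M) ^ m ≠ 1) {z : ℤ} (h : u ^ z = 1) : z = 0 := by
  by_contra hz
  obtain ⟨n, hn, hun⟩ := (isOfFinOrder_iff_zpow_eq_one.mpr ⟨z, hz, h⟩).exists_pow_eq_one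
  exact hu n hn.ne' (by simpa using congrArg Units.val hun)

section RightIdealizer

variable (K : Type*) {A : Type*} [CommRing K] [Ring A] [Algebra K A] (I : Submodule A A)

def rightIdealizer : Subalgebra K A where
  carrier := {s | ∀ x ∈ I, x * s ∈ I}
  mul_mem' {s t} hs ht x hx := by rw [← mul_assoc]; exact ht _ (hs x hx)
  add_mem' {s t} hs ht x hx := by rw [mul_add]; exact I.add_mem (hs x hx) (ht x hx)
  algebraMap_mem' c x hx := by rw [← Algebra.commutes]; exact I.smul_mem _ hx

variable {K I}

theorem mem_rightIdealizer_span {S : Set A} {s : A} :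
    s ∈ rightIdealizer K (Submodule.span A S) ↔ ∀ g ∈ S, g * s ∈ Submodule.span A S := by
  refine ⟨fun hs g hg => hs g (Submodule.subset_span hg), fun hS => ?_⟩
  have : Submodule.span A S ≤ (Submodule.span A S).comap (LinearMap.toSpanSingleton A A s) :=
    Submodule.span_le.mpr hS
  exact fun x hx => this hx

variable (K I) in
def rightMulQ (s : rightIdealizer K I) : Module.End A (A ⧸ I) :=
  I.mapQ I (LinearMap.toSpanSingleton A A s) s.2

theorem rightMulQ_mk (s : rightIdealizer K I) (x : A) :
    rightMulQ K I s (Submodule.Quotient.mk x) = Submodule.Quotient.mk (x * s) := rfl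

theorem quotient_end_ext {f g : Module.End A (A ⧸ I)}
    (h : f (Submodule.Quotient.mk 1) = g (Submodule.Quotient.mk 1)) : f = g :=
  Submodule.linearMap_qext _ (LinearMap.ext_ring h)

variable (K I) in
def toEndOp : rightIdealizer K I →ₐ[K] (Module.End A (A ⧸ I))ᵐᵒᵖ where
  toFun s := MulOpposite.op (rightMulQ K I s)
  map_one' := congrArg _ (quotient_end_ext (by simp [rightMulQ_mk]))
  map_mul' s t := MulOpposite.unop_injective (quotient_end_ext (by simp [rightMulQ_mk]))
  map_zero' := congrArg _ (quotient_end_ext (by simp [rightMulQ_mk]))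
  map_add' s t := MulOpposite.unop_injective (quotient_end_ext (by simp [rightMulQ_mk]))
  commutes' c := MulOpposite.unop_injective (quotient_end_ext (by
    simp [rightMulQ_mk, Algebra.algebraMap_eq_smul_one]))

theorem toEndOp_unop_mk (s : rightIdealizer K I) (x : A) :
    (toEndOp K I s).unop (Submodule.Quotient.mk x) = Submodule.Quotient.mk (x * s) := rfl

theorem toEndOp_surjective : Function.Surjective (toEndOp K I) := by
  intro f
  obtain ⟨s, hs⟩ := Submodule.Quotient.mk_surjective I (f.unop (Submodule.Quotient.mk 1))
  have hmem : s ∈ rightIdealizer K I := fun x hx => by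
    rw [← Submodule.Quotient.mk_eq_zero, ← smul_eq_mul, Submodule.Quotient.mk_smul, hs,
      ← map_smul, ← Submodule.Quotient.mk_smul, smul_eq_mul, mul_one,
      (Submodule.Quotient.mk_eq_zero I).mpr hx, map_zero]
  refine ⟨⟨s, hmem⟩, MulOpposite.unop_injective (quotient_end_ext ?_)⟩
  rw [toEndOp_unop_mk, one_mul, hs]

theorem toEndOp_eq_zero_iff {s : rightIdealizer K I} : toEndOp K I s = 0 ↔ (s : A) ∈ I := by
  rw [← MulOpposite.unop_inj, MulOpposite.unop_zero]
  constructor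
  · intro h
    have := LinearMap.congr_fun h (Submodule.Quotient.mk 1)
    rwa [toEndOp_unop_mk, one_mul, LinearMap.zero_apply, Submodule.Quotient.mk_eq_zero] at this
  · intro h
    refine quotient_end_ext ?_
    rw [toEndOp_unop_mk, one_mul, LinearMap.zero_apply, Submodule.Quotient.mk_eq_zero]
    exact h

theorem toEndOp_eq_toEndOp_iff {s t : rightIdealizer K I} :
    toEndOp K I s = toEndOp K I t ↔ (s : A) - t ∈ I := by
  rw [← sub_eq_zero, ← map_sub, toEndOp_eq_zero_iff, Subalgebra.coe_sub]

end RightIdealizer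

namespace SmashD

variable {K : Type} [Field K] {N : ℕ} {q : Kˣ} {b : Fin N → Kˣ}

section Generators

variable (K q)

def Xe (i : Fin N) : SmashD K N q := RingQuot.mkAlgHom K (SRel K N q) (sg K (.X i))

def XeInv (i : Fin N) : SmashD K N q := RingQuot.mkAlgHom K (SRel K N q) (sg K (.Xinv i))

def Se (w : Equiv.Perm (Fin N)) : SmashD K N q := RingQuot.mkAlgHom K (SRel K N q) (sg K (.S w))

end Generators

theorem Xe_commute (i j : Fin N) : Commute (Xe K q i) (Xe K q j) := by
  simpa [Xe, Commute, SemiconjBy] using RingQuot.mkAlgHom_rel K (SRel.XX (q := q) i j)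

theorem Xe_mul_XeInv (i : Fin N) : Xe K q i * XeInv K q i = 1 := by
  simpa [Xe, XeInv] using RingQuot.mkAlgHom_rel K (SRel.XXinv (q := q) i)

theorem XeInv_mul_Xe (i : Fin N) : XeInv K q i * Xe K q i = 1 := by
  simpa [Xe, XeInv] using RingQuot.mkAlgHom_rel K (SRel.XinvX (q := q) i)

theorem Ye_mul_YeInv (i : Fin N) : Ye K q i * YeInv K q i = 1 := by
  simpa [Ye, YeInv] using RingQuot.mkAlgHom_rel K (SRel.YYinv (q := q) i)

theorem YeInv_mul_Ye (i : Fin N) : YeInv K q i * Ye K q i = 1 := by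
  simpa [Ye, YeInv] using RingQuot.mkAlgHom_rel K (SRel.YinvY (q := q) i)

theorem Ye_commute_Xe {i j : Fin N} (h : i ≠ j) : Commute (Ye K q i) (Xe K q j) := by
  simpa [Ye, Xe, Commute, SemiconjBy] using RingQuot.mkAlgHom_rel K (SRel.YXne (q := q) i j h)

theorem Ye_mul_Xe_self (i : Fin N) : Ye K q i * Xe K q i = (q : K) • (Xe K q i * Ye K q i) := by
  simpa [Ye, Xe] using RingQuot.mkAlgHom_rel K (SRel.YXeq (q := q) i)

theorem Se_mul_Se (w w' : Equiv.Perm (Fin N)) : Se K q w * Se K q w' = Se K q (w * w') := by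
  simpa [Se] using RingQuot.mkAlgHom_rel K (SRel.Smul (q := q) w w')

theorem Se_one : Se K q (1 : Equiv.Perm (Fin N)) = 1 := by
  simpa [Se] using RingQuot.mkAlgHom_rel K (SRel.Sone (K := K) (N := N) (q := q))

theorem Se_semiconj_Xe (w : Equiv.Perm (Fin N)) (i : Fin N) :
    SemiconjBy (Se K q w) (Xe K q i) (Xe K q (w i)) := by
  simpa [Se, Xe, SemiconjBy] using RingQuot.mkAlgHom_rel K (SRel.SX (q := q) w i)

theorem Se_semiconj_Ye (w : Equiv.Perm (Fin N)) (i : Fin N) :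
    SemiconjBy (Se K q w) (Ye K q i) (Ye K q (w i)) := by
  simpa [Se, Ye, SemiconjBy] using RingQuot.mkAlgHom_rel K (SRel.SY (q := q) w i)

variable (K q) in
def seHom : Equiv.Perm (Fin N) →* SmashD K N q where
  toFun := Se K q
  map_one' := Se_one
  map_mul' w w' := (Se_mul_Se w w').symm

variable (K q) in
def Xu (i : Fin N) : (SmashD K N q)ˣ := ⟨Xe K q i, XeInv K q i, Xe_mul_XeInv i, XeInv_mul_Xe i⟩

variable (K q) in
def Yu (i : Fin N) : (SmashD K N q)ˣ := ⟨Ye K q i, YeInv K q i, Ye_mul_YeInv i, YeInv_mul_Ye i⟩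

theorem Ye_mul_Se (i : Fin N) (w : Equiv.Perm (Fin N)) :
    Ye K q i * Se K q w = Se K q w * Ye K q (w⁻¹ i) := by
  simpa using (Se_semiconj_Ye (K := K) (q := q) w (w⁻¹ i)).eq.symm

theorem YeInv_mul_Se (i : Fin N) (w : Equiv.Perm (Fin N)) :
    YeInv K q i * Se K q w = Se K q w * YeInv K q (w⁻¹ i) := by
  have h : SemiconjBy (Se K q w) ↑(Yu K q (w⁻¹ i)) ↑(Yu K q i) := by
    have h := Se_semiconj_Ye (K := K) (q := q) w (w⁻¹ i)
    rwa [Equiv.Perm.coe_inv, Equiv.apply_symm_apply] at h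
  exact h.units_inv_right.eq.symm

variable (K q) in
def Xm (a : Fin N → ℤ) : (SmashD K N q)ˣ :=
  MonoidHom.noncommPiCoprod (fun i => zpowersHom _ (Xu K q i))
    (fun i j _ x y => by
      simpa using (show Commute (Xu K q i) (Xu K q j) from
        Units.ext (Xe_commute i j)).zpow_zpow x.toAdd y.toAdd)
    (fun i => Multiplicative.ofAdd (a i))

theorem Xm_add (a a' : Fin N → ℤ) : Xm K q (a + a') = Xm K q a * Xm K q a' :=
  map_mul _ (fun i => Multiplicative.ofAdd (a i)) (fun i => Multiplicative.ofAdd (a' i))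

theorem Xm_zero : Xm K q (0 : Fin N → ℤ) = 1 :=
  map_one _

theorem Xm_single (j : Fin N) (z : ℤ) : Xm K q (Pi.single j z) = Xu K q j ^ z := by
  have h : (fun i => Multiplicative.ofAdd ((Pi.single j z : Fin N → ℤ) i))
      = Pi.mulSingle j (Multiplicative.ofAdd z) := by
    funext i
    by_cases hij : i = j
    · subst hij; simp
    · simp [Pi.single_eq_of_ne hij, Pi.mulSingle_eq_of_ne hij]
  rw [Xm, h]
  exact MonoidHom.noncommPiCoprod_mulSingle _ j _

theorem Ye_mul_Xm (i : Fin N) (a : Fin N → ℤ) :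
    Ye K q i * Xm K q a = ((q ^ a i : Kˣ) : K) • (↑(Xm K q a) * Ye K q i) := by
  induction a using Pi.single_induction with
  | zero => simp [Xm_zero]
  | add f g hf hg =>
    rw [Xm_add, Units.val_mul, ← mul_assoc, hf, smul_mul_assoc, mul_assoc, hg, mul_smul_comm,
      smul_smul, ← mul_assoc, Pi.add_apply, zpow_add, Units.val_mul]
  | single j z =>
    rw [Xm_single]
    by_cases hij : i = j
    · subst hij
      simpa using mul_units_zpow_eq_smul (c := q) (Ye_mul_Xe_self i) z
    · simpa [Pi.single_eq_of_ne hij] using ((Ye_commute_Xe hij).units_zpow_right z).eq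

theorem Se_mul_Xm (w : Equiv.Perm (Fin N)) (a : Fin N → ℤ) :
    Se K q w * Xm K q a = ↑(Xm K q (a ∘ ⇑w⁻¹)) * Se K q w := by
  induction a using Pi.single_induction with
  | zero => simp [Xm_zero]
  | add f g hf hg =>
    rw [Pi.add_comp, Xm_add, Xm_add, Units.val_mul, Units.val_mul, ← mul_assoc, hf, mul_assoc, hg,
      mul_assoc]
  | single j z =>
    rw [Pi.single_comp_equiv, Xm_single, Xm_single]
    exact (Se_semiconj_Xe w j).units_zpow_right (y := Xu K q (w j)) z

theorem induction_on {P : SmashD K N q → Prop} (d : SmashD K N q)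
    (algebraMap : ∀ c : K, P (algebraMap K _ c))
    (gen : ∀ g : SGen N, P (RingQuot.mkAlgHom K (SRel K N q) (sg K g)))
    (add : ∀ x y, P x → P y → P (x + y)) (mul : ∀ x y, P x → P y → P (x * y)) : P d := by
  obtain ⟨x, rfl⟩ := RingQuot.mkAlgHom_surjective K (SRel K N q) d
  induction x using FreeAlgebra.induction with
  | grade0 c => simpa using algebraMap c
  | grade1 g => exact gen g
  | mul x y hx hy => simpa using mul _ _ hx hy
  | add x y hx hy => simpa using add _ _ hx hy

/-- `(a, w)` stands for the monomial `X^a s_w`. The induced module has the `K`-basis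
`X^a s_w ⊗ 1`; it is realised as `Model K N`, on which `D` acts through `modelRep`. -/
abbrev MonoIndex (N : ℕ) := (Fin N → ℤ) × Equiv.Perm (Fin N)

abbrev Model (K : Type) [Field K] (N : ℕ) := MonoIndex N →₀ K

section Model

variable (q b)

/-- `Y_i X^a s_w = q^{a_i} X^a s_w Y_{w⁻¹ i}`, so `Y_i` acts on `X^a s_w ⊗ 1` by this scalar. -/
def weight (p : MonoIndex N) (i : Fin N) : Kˣ := q ^ p.1 i * b (p.2⁻¹ i)

variable (K) in
def modelX (i : Fin N) : Module.End K (Model K N) :=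
  Finsupp.lmapDomain K K fun p => (p.1 + Pi.single i 1, p.2)

variable (K) in
def modelXInv (i : Fin N) : Module.End K (Model K N) :=
  Finsupp.lmapDomain K K fun p => (p.1 + Pi.single i (-1), p.2)

def modelY (i : Fin N) : Module.End K (Model K N) :=
  Finsupp.lsum K fun p => (weight q b p i : K) • Finsupp.lsingle p

def modelYInv (i : Fin N) : Module.End K (Model K N) :=
  Finsupp.lsum K fun p => (↑(weight q b p i)⁻¹ : K) • Finsupp.lsingle p

variable (K) in
def modelS (w : Equiv.Perm (Fin N)) : Module.End K (Model K N) :=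
  Finsupp.lmapDomain K K fun p => (p.1 ∘ ⇑w⁻¹, w * p.2)

def modelGen : SGen N → Module.End K (Model K N)
  | .X i => modelX K i
  | .Xinv i => modelXInv K i
  | .Y i => modelY q b i
  | .Yinv i => modelYInv q b i
  | .S w => modelS K w

variable {q b}

@[simp] theorem modelX_single (i : Fin N) (p : MonoIndex N) (k : K) :
    modelX K i (Finsupp.single p k) = Finsupp.single (p.1 + Pi.single i 1, p.2) k := by
  simp [modelX]

@[simp] theorem modelXInv_single (i : Fin N) (p : MonoIndex N) (k : K) :
    modelXInv K i (Finsupp.single p k) = Finsupp.single (p.1 + Pi.single i (-1), p.2) k := by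
  simp [modelXInv]

@[simp] theorem modelY_single (i : Fin N) (p : MonoIndex N) (k : K) :
    modelY q b i (Finsupp.single p k) = Finsupp.single p ((weight q b p i : K) * k) := by
  simp [modelY]

@[simp] theorem modelYInv_single (i : Fin N) (p : MonoIndex N) (k : K) :
    modelYInv q b i (Finsupp.single p k) = Finsupp.single p (↑(weight q b p i)⁻¹ * k) := by
  simp [modelYInv]

@[simp] theorem modelS_single (w : Equiv.Perm (Fin N)) (p : MonoIndex N) (k : K) :
    modelS K w (Finsupp.single p k) = Finsupp.single (p.1 ∘ ⇑w⁻¹, w * p.2) k := by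
  simp [modelS]

theorem weight_add_single (p : MonoIndex N) (i j : Fin N) (z : ℤ) :
    weight q b (p.1 + Pi.single j z, p.2) i =
      q ^ (Pi.single j z : Fin N → ℤ) i * weight q b p i := by
  simp only [weight, Pi.add_apply, zpow_add]
  group

theorem weight_perm (p : MonoIndex N) (w : Equiv.Perm (Fin N)) (i : Fin N) :
    weight q b (p.1 ∘ ⇑w⁻¹, w * p.2) (w i) = weight q b p i := by
  simp [weight]

theorem modelGen_rel ⦃x y : FreeAlgebra K (SGen N)⦄ (h : SRel K N q x y) :
    FreeAlgebra.lift K (modelGen q b) x = FreeAlgebra.lift K (modelGen q b) y := by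
  cases h <;> refine Finsupp.lhom_ext fun p k => ?_ <;>
    simp only [sg, FreeAlgebra.lift_ι_apply, map_mul, map_one, map_smul, Module.End.mul_apply,
      Module.End.one_apply, LinearMap.smul_apply, modelGen, modelX_single, modelXInv_single,
      modelY_single, modelYInv_single, modelS_single, Finsupp.smul_single, smul_eq_mul,
      weight_add_single]
  case XX => rw [add_right_comm]
  case XXinv => rw [add_assoc, ← Pi.single_add, neg_add_cancel, Pi.single_zero, add_zero]
  case XinvX => rw [add_assoc, ← Pi.single_add, add_neg_cancel, Pi.single_zero, add_zero]
  case YY => rw [mul_left_comm]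
  case YYinv => rw [Units.mul_inv_cancel_left]
  case YinvY => rw [Units.inv_mul_cancel_left]
  case YXne h => rw [Pi.single_eq_of_ne h, zpow_zero, one_mul]
  case YXeq => rw [Pi.single_eq_same, zpow_one, Units.val_mul, mul_assoc]
  case Smul => rw [mul_inv_rev, Equiv.Perm.coe_mul, Function.comp_assoc, mul_assoc]
  case Sone => rw [inv_one, Equiv.Perm.coe_one, Function.comp_id, one_mul]
  case SX => simp [Pi.add_comp, Pi.single_comp_equiv]
  case SY => rw [weight_perm]

end Model

variable (q b) in
def modelRep : SmashD K N q →ₐ[K] Module.End K (Model K N) :=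
  RingQuot.liftAlgHom K ⟨FreeAlgebra.lift K (modelGen q b), modelGen_rel⟩

theorem modelRep_mkAlgHom_sg (g : SGen N) :
    modelRep q b (RingQuot.mkAlgHom K (SRel K N q) (sg K g)) = modelGen q b g := by
  simp [modelRep, sg]

@[simp] theorem modelRep_Xe (i : Fin N) : modelRep q b (Xe K q i) = modelX K i :=
  modelRep_mkAlgHom_sg _

@[simp] theorem modelRep_Ye (i : Fin N) : modelRep q b (Ye K q i) = modelY q b i :=
  modelRep_mkAlgHom_sg _

@[simp] theorem modelRep_YeInv (i : Fin N) : modelRep q b (YeInv K q i) = modelYInv q b i :=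
  modelRep_mkAlgHom_sg _

@[simp] theorem modelRep_Se (w : Equiv.Perm (Fin N)) : modelRep q b (Se K q w) = modelS K w :=
  modelRep_mkAlgHom_sg _

variable (q b) in
def toModel : SmashD K N q →ₗ[K] Model K N :=
  LinearMap.applyₗ (Finsupp.single (0, 1) 1) ∘ₗ (modelRep q b).toLinearMap

theorem toModel_apply (d : SmashD K N q) :
    toModel q b d = modelRep q b d (Finsupp.single (0, 1) 1) := rfl

theorem toModel_mul (d d' : SmashD K N q) :
    toModel q b (d * d') = modelRep q b d (toModel q b d') := by
  simp [toModel_apply]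

variable (K q) in
def mono (p : MonoIndex N) : SmashD K N q := ↑(Xm K q p.1) * Se K q p.2

variable (K q) in
def ofModel : Model K N →ₗ[K] SmashD K N q := Finsupp.linearCombination K (mono K q)

theorem ofModel_single (p : MonoIndex N) (k : K) :
    ofModel K q (Finsupp.single p k) = k • mono K q p :=
  Finsupp.linearCombination_single K k p

theorem Xe_mul_mono (i : Fin N) (p : MonoIndex N) :
    Xe K q i * mono K q p = mono K q (p.1 + Pi.single i 1, p.2) := by
  rw [mono, mono, add_comm, Xm_add, Xm_single, zpow_one, Units.val_mul, mul_assoc]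
  rfl

theorem Se_mul_mono (w : Equiv.Perm (Fin N)) (p : MonoIndex N) :
    Se K q w * mono K q p = mono K q (p.1 ∘ ⇑w⁻¹, w * p.2) := by
  rw [mono, mono, ← mul_assoc, Se_mul_Xm, mul_assoc, Se_mul_Se]

theorem Ye_mul_mono (i : Fin N) (p : MonoIndex N) :
    Ye K q i * mono K q p = ((q ^ p.1 i : Kˣ) : K) • (mono K q p * Ye K q (p.2⁻¹ i)) := by
  rw [mono, ← mul_assoc, Ye_mul_Xm, smul_mul_assoc, mul_assoc, Ye_mul_Se, ← mul_assoc]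

theorem Ye_sub_mem_charIdeal (i : Fin N) :
    Ye K q i - algebraMap K (SmashD K N q) (b i : K) ∈ charIdeal K N q b :=
  Submodule.subset_span (Or.inl ⟨i, rfl⟩)

theorem YeInv_sub_mem_charIdeal (i : Fin N) :
    YeInv K q i - algebraMap K (SmashD K N q) ((b i)⁻¹ : Kˣ) ∈ charIdeal K N q b :=
  Submodule.subset_span (Or.inr ⟨i, rfl⟩)

theorem mul_Ye_sub_smul_mem_charIdeal (d : SmashD K N q) (i : Fin N) :
    d * Ye K q i - (b i : K) • d ∈ charIdeal K N q b := by
  have h := (charIdeal K N q b).smul_mem d (Ye_sub_mem_charIdeal i)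
  rwa [smul_eq_mul, mul_sub, ← Algebra.commutes, ← Algebra.smul_def] at h

variable (b) in
def Compatible (d : SmashD K N q) : Prop :=
  ∀ m : Model K N, ofModel K q (modelRep q b d m) - d * ofModel K q m ∈ charIdeal K N q b

theorem compatible_of_single {d : SmashD K N q}
    (h : ∀ p k, ofModel K q (modelRep q b d (Finsupp.single p k))
      - d * ofModel K q (Finsupp.single p k) ∈ charIdeal K N q b) : Compatible b d := by
  intro m
  induction m using Finsupp.induction_linear with
  | zero => simp
  | add f g hf hg =>
    simpa only [map_add, mul_add, add_sub_add_comm] using Submodule.add_mem _ hf hg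
  | single p k => exact h p k

theorem compatible_algebraMap (c : K) : Compatible b (algebraMap K (SmashD K N q) c) := by
  intro m
  simp [Module.algebraMap_end_apply, Algebra.smul_def]

theorem Compatible.add {d d' : SmashD K N q} (h : Compatible b d) (h' : Compatible b d') :
    Compatible b (d + d') := by
  intro m
  simpa only [map_add, LinearMap.add_apply, add_mul, add_sub_add_comm] using
    Submodule.add_mem _ (h m) (h' m)

theorem Compatible.mul {d d' : SmashD K N q} (h : Compatible b d) (h' : Compatible b d') :
    Compatible b (d * d') := by
  intro m
  have := Submodule.add_mem _ (h (modelRep q b d' m)) ((charIdeal K N q b).smul_mem d (h' m))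
  rw [smul_eq_mul] at this
  convert this using 1
  rw [map_mul, Module.End.mul_apply, mul_sub, mul_assoc]
  abel

theorem Compatible.of_mul_eq_one {u v : SmashD K N q} (h : Compatible b u) (huv : u * v = 1)
    (hvu : v * u = 1) : Compatible b v := by
  intro m
  have := (charIdeal K N q b).smul_mem v (h (modelRep q b v m))
  rw [← Module.End.mul_apply, ← map_mul, huv, map_one, Module.End.one_apply, smul_eq_mul,
    mul_sub, ← mul_assoc, hvu, one_mul] at this
  simpa using (charIdeal K N q b).neg_mem this

theorem compatible_Xe (i : Fin N) : Compatible b (Xe K q i) :=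
  compatible_of_single fun p k => by
    rw [modelRep_Xe, modelX_single, ofModel_single, ofModel_single, mul_smul_comm, Xe_mul_mono,
      sub_self]
    exact Submodule.zero_mem _

theorem compatible_Se (w : Equiv.Perm (Fin N)) : Compatible b (Se K q w) :=
  compatible_of_single fun p k => by
    rw [modelRep_Se, modelS_single, ofModel_single, ofModel_single, mul_smul_comm, Se_mul_mono,
      sub_self]
    exact Submodule.zero_mem _

theorem compatible_Ye (i : Fin N) : Compatible b (Ye K q i) :=
  compatible_of_single fun p k => by
    have h := (charIdeal K N q b).smul_of_tower_mem (-(k * (q ^ p.1 i : Kˣ)) : K)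
      (mul_Ye_sub_smul_mem_charIdeal (mono K q p) (p.2⁻¹ i))
    rw [modelRep_Ye, modelY_single, ofModel_single, ofModel_single, mul_smul_comm, Ye_mul_mono]
    convert h using 1
    rw [weight, Units.val_mul]
    generalize mono K q p * Ye K q (p.2⁻¹ i) = x
    module

theorem compatible (d : SmashD K N q) : Compatible b d := by
  induction d using induction_on with
  | algebraMap c => exact compatible_algebraMap c
  | add x y hx hy => exact hx.add hy
  | mul x y hx hy => exact hx.mul hy
  | gen g =>
    cases g with
    | X i => exact compatible_Xe i
    | Xinv i => exact (compatible_Xe i).of_mul_eq_one (Xe_mul_XeInv i) (XeInv_mul_Xe i)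
    | Y i => exact compatible_Ye i
    | Yinv i => exact (compatible_Ye i).of_mul_eq_one (Ye_mul_YeInv i) (YeInv_mul_Ye i)
    | S w => exact compatible_Se w

theorem ofModel_toModel_sub_mem (d : SmashD K N q) :
    ofModel K q (toModel q b d) - d ∈ charIdeal K N q b := by
  have h1 : ofModel K q (Finsupp.single ((0 : Fin N → ℤ), 1) 1) = 1 := by
    rw [ofModel_single, one_smul, mono, Xm_zero, Units.val_one, one_mul]
    exact Se_one
  simpa [toModel_apply, h1] using compatible (b := b) d (Finsupp.single (0, 1) 1)

theorem toModel_eq_zero_of_mem {d : SmashD K N q} (hd : d ∈ charIdeal K N q b) :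
    toModel q b d = 0 := by
  induction hd using Submodule.span_induction with
  | mem x hx =>
    rcases hx with ⟨i, rfl⟩ | ⟨i, rfl⟩ <;>
      simp [toModel_apply, Module.algebraMap_end_apply, weight]
  | zero => exact map_zero _
  | add x y _ _ hx hy => rw [map_add, hx, hy, add_zero]
  | smul c x _ hx => rw [smul_eq_mul, toModel_mul, hx, map_zero]

theorem toModel_eq_zero_iff {d : SmashD K N q} : toModel q b d = 0 ↔ d ∈ charIdeal K N q b := by
  refine ⟨fun h => ?_, toModel_eq_zero_of_mem⟩
  simpa [h] using (charIdeal K N q b).neg_mem (ofModel_toModel_sub_mem (b := b) d)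

theorem toModel_eq_toModel_iff {d d' : SmashD K N q} :
    toModel q b d = toModel q b d' ↔ d - d' ∈ charIdeal K N q b := by
  rw [← sub_eq_zero, ← map_sub, toModel_eq_zero_iff]

theorem modelY_apply (i : Fin N) (m : Model K N) (p : MonoIndex N) :
    modelY q b i m p = weight q b p i * m p := by
  induction m using Finsupp.induction_linear with
  | zero => simp
  | add f g hf hg => rw [map_add, Finsupp.add_apply, hf, hg, Finsupp.add_apply, mul_add]
  | single p' k =>
    rw [modelY_single]
    by_cases h : p' = p
    · subst h; simp
    · simp [Finsupp.single_eq_of_ne' h]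

theorem eq_zero_and_mem_permStab_of_weight (hq : ∀ m : ℕ, m ≠ 0 → (q : K) ^ m ≠ 1)
    (hb : ∀ i j : Fin N, b i ≠ b j → ∀ z : ℤ, b i / b j ≠ q ^ z) {p : MonoIndex N}
    (h : ∀ i, weight q b p i = b i) : p.1 = 0 ∧ p.2 ∈ permStab K N b := by
  have hstab : ∀ i, b (p.2⁻¹ i) = b i := fun i => by
    by_contra hne
    exact hb i (p.2⁻¹ i) (Ne.symm hne) (p.1 i) (div_eq_iff_eq_mul.mpr (h i).symm)
  refine ⟨funext fun i => eq_zero_of_units_zpow_eq_one hq ?_, (permStab K N b).inv_mem_iff.mp hstab⟩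
  have := h i
  rwa [weight, hstab, mul_eq_right] at this

variable (b) in
def stabIndex (w : permStab K N b) : MonoIndex N := (0, w)

theorem stabIndex_injective : Function.Injective (stabIndex b) :=
  fun _ _ h => Subtype.ext (congrArg Prod.snd h)

theorem support_subset_range_stabIndex (hq : ∀ m : ℕ, m ≠ 0 → (q : K) ^ m ≠ 1)
    (hb : ∀ i j : Fin N, b i ≠ b j → ∀ z : ℤ, b i / b j ≠ q ^ z) {m : Model K N}
    (hm : ∀ i, modelY q b i m = (b i : K) • m) : ↑m.support ⊆ Set.range (stabIndex b) := by
  intro p hp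
  have hweight : ∀ i, weight q b p i = b i := fun i => by
    have := congrArg (· p) (hm i)
    simp only [modelY_apply, Finsupp.smul_apply, smul_eq_mul] at this
    exact Units.ext (mul_right_cancel₀ (Finsupp.mem_support_iff.mp hp) this)
  obtain ⟨h1, h2⟩ := eq_zero_and_mem_permStab_of_weight hq hb hweight
  exact ⟨⟨p.2, h2⟩, Prod.ext h1.symm rfl⟩

theorem Se_mem_rightIdealizer {w : Equiv.Perm (Fin N)} (hw : w ∈ permStab K N b) :
    Se K q w ∈ rightIdealizer K (charIdeal K N q b) := by
  have hb : ∀ i, b (w⁻¹ i) = b i := fun i => by simpa using (hw (w⁻¹ i)).symm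
  rw [charIdeal, mem_rightIdealizer_span]
  rintro g (⟨i, rfl⟩ | ⟨i, rfl⟩)
  · rw [sub_mul, Ye_mul_Se, Algebra.commutes, ← hb i, ← mul_sub]
    exact Submodule.smul_mem _ _ (Ye_sub_mem_charIdeal _)
  · rw [sub_mul, YeInv_mul_Se, Algebra.commutes, ← hb i, ← mul_sub]
    exact Submodule.smul_mem _ _ (YeInv_sub_mem_charIdeal _)

variable (K q b) in
def stabAlgHom : MonoidAlgebra K (permStab K N b) →ₐ[K] rightIdealizer K (charIdeal K N q b) :=
  MonoidAlgebra.lift K _ _ <|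
    ((seHom K q).comp (permStab K N b).subtype).codRestrict _ fun w => Se_mem_rightIdealizer w.2

theorem toModel_Se (w : Equiv.Perm (Fin N)) : toModel q b (Se K q w) = Finsupp.single (0, w) 1 := by
  simp [toModel_apply]

theorem toModel_stabAlgHom (x : MonoidAlgebra K (permStab K N b)) :
    toModel q b (stabAlgHom K q b x) = Finsupp.mapDomain (stabIndex b) x.coeff := by
  simp [stabAlgHom, MonoidAlgebra.lift_apply, Finsupp.sum, map_sum, seHom, toModel_Se,
    Finsupp.mapDomain, stabIndex]

theorem toModel_stabAlgHom_injective :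
    Function.Injective fun x => toModel q b (stabAlgHom K q b x) := fun x y h => by
  simp only [toModel_stabAlgHom] at h
  exact MonoidAlgebra.coeff_injective (Finsupp.mapDomain_injective stabIndex_injective h)

theorem exists_toModel_stabAlgHom_eq (hq : ∀ m : ℕ, m ≠ 0 → (q : K) ^ m ≠ 1)
    (hb : ∀ i j : Fin N, b i ≠ b j → ∀ z : ℤ, b i / b j ≠ q ^ z)
    (s : rightIdealizer K (charIdeal K N q b)) :
    ∃ x, toModel q b (stabAlgHom K q b x) = toModel q b s := by
  have hweight : ∀ i, modelY q b i (toModel q b s) = (b i : K) • toModel q b s := fun i => by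
    have := toModel_eq_zero_of_mem (s.2 _ (Ye_sub_mem_charIdeal (b := b) (q := q) i))
    rwa [sub_mul, map_sub, toModel_mul, toModel_mul, modelRep_Ye, AlgHom.commutes,
      Module.algebraMap_end_apply, sub_eq_zero] at this
  refine ⟨.ofCoeff (Finsupp.comapDomain _ (toModel q b s) stabIndex_injective.injOn), ?_⟩
  rw [toModel_stabAlgHom, MonoidAlgebra.coeff_ofCoeff, Finsupp.mapDomain_comapDomain _
    stabIndex_injective _ (support_subset_range_stabIndex hq hb hweight)]

end SmashD

theorem statement13_general (K : Type) [Field K] (N : ℕ)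
    (q : Kˣ) (hq : ∀ m : ℕ, m ≠ 0 → (q : K) ^ m ≠ 1)
    (b : Fin N → Kˣ)
    (hb : ∀ i j : Fin N, b i ≠ b j → ∀ z : ℤ, b i / b j ≠ q ^ z) :
    Nonempty
      (Module.End (SmashD K N q) (SmashD K N q ⧸ charIdeal K N q b) ≃ₐ[K]
        (MonoidAlgebra K ↥(permStab K N b))ᵐᵒᵖ) := by
  let Φ := (toEndOp K (charIdeal K N q b)).comp (SmashD.stabAlgHom K q b)
  have hΦ : ∀ x s, Φ x = toEndOp K _ s ↔
      SmashD.toModel q b (SmashD.stabAlgHom K q b x) = SmashD.toModel q b s :=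
    fun _ _ => toEndOp_eq_toEndOp_iff.trans SmashD.toModel_eq_toModel_iff.symm
  have hΦbij : Function.Bijective Φ := by
    refine ⟨fun x y h => SmashD.toModel_stabAlgHom_injective ((hΦ x _).mp h), fun f => ?_⟩
    obtain ⟨s, rfl⟩ := toEndOp_surjective (K := K) f
    obtain ⟨x, hx⟩ := SmashD.exists_toModel_stabAlgHom_eq hq hb s
    exact ⟨x, (hΦ x s).mpr hx⟩
  exact ⟨(AlgEquiv.opOp K _).trans (AlgEquiv.ofBijective Φ hΦbij).symm.op⟩

theorem statement13 (K : Type) [Field K] [CharZero K] (N : ℕ) (hN : 1 ≤ N)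
    (q : Kˣ) (hq : ∀ m : ℕ, m ≠ 0 → (q : K) ^ m ≠ 1)
    (b : Fin N → Kˣ)
    (hb : ∀ i j : Fin N, b i ≠ b j → ∀ z : ℤ, b i / b j ≠ q ^ z) :
    Nonempty
      (Module.End (SmashD K N q) (SmashD K N q ⧸ charIdeal K N q b) ≃ₐ[K]
        (MonoidAlgebra K ↥(permStab K N b))ᵐᵒᵖ) :=
  statement13_general K N q hq b hb

end
end
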